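/- arXiv:2109.05175 — 7 statements merged into one kernel-verified Lean document; each statement's English description precedes it below -/
import Mathlib

section
/- Let (Ω, F, P) be a probability space, X : Ω → 𝒳 a measurable map into a measurable space, and m = σ(X). Let D₁, D₀, Z¹, Z⁰ : Ω → {0,1} be measurable and Y₁, Y₀ ∈ L¹(P). Define D^k := Z^k·D₁ + (1−Z^k)·D₀ and Y^k := D^k·Y₁ + (1−D^k)·Y₀ for k = 0,1. Assume the pair (Z¹, Z⁰) is conditionally independent of the quadruple (Y₁, Y₀, D₁, D₀) given m, and D₁ ≥ D₀ almost surely. Then P-almost everywhere, (E[Y¹ | m] − E[Y⁰ | m]) · E[1{D₁ > D₀} | m] = (E[D¹ | m] − E[D⁰ | m]) · E[(Y₁ − Y₀)·1{D₁ > D₀} | m]. (In particular, wherever E[D¹|m] − E[D⁰|m] ≠ 0 and E[1{D₁>D₀}|m] ≠ 0, the local average treatment effect E[(Y₁−Y₀)·1{D₁>D₀}|m] / E[1{D₁>D₀}|m] equals (E[Y¹|m] − E[Y⁰|m]) / (E[D¹|m] − E[D⁰|m]).) -/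
/-!
For `z` with values in `{0,1}`, `select z a b` is `a` where `z = 1` and `b` where `z = 0`. Observed
treatments and outcomes are selections by the regime indicator:
`D^k = select Z^k D₁ D₀` and `Y^k = select Z^k (select D₁ Y₁ Y₀) (select D₀ Y₁ Y₀)`.
The difference of two selections of the same pair `(a, b)` is `(Z¹ - Z⁰) (a - b)`, and conditional
independence factorizes its conditional expectation as `(E[Z¹|m] - E[Z⁰|m]) E[a - b|m]`.
Under monotonicity `D₁ - D₀ = 1{D₁ > D₀}` a.s., so both sides of the identity equal
`(E[Z¹|m] - E[Z⁰|m]) E[1{D₁>D₀}|m] E[(Y₁ - Y₀) 1{D₁>D₀}|m]`.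
-/

open MeasureTheory ProbabilityTheory

section Select

variable {Ω : Type*}

def select (z a b : Ω → ℝ) : Ω → ℝ := fun ω ↦ z ω * a ω + (1 - z ω) * b ω

theorem select_sub_select (z₁ z₀ a b : Ω → ℝ) :
    select z₁ a b - select z₀ a b = (z₁ - z₀) * (a - b) := by
  funext ω
  simp only [select, Pi.sub_apply, Pi.mul_apply]
  ring

theorem select_select (z a b c d : Ω → ℝ) :
    select (select z a b) c d = select z (select a c d) (select b c d) := by
  funext ω
  simp only [select]
  ring

variable {mΩ : MeasurableSpace Ω} {μ : Measure Ω}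

theorem integrable_of_eq_zero_or_eq_one [IsFiniteMeasure μ] {f : Ω → ℝ}
    (hf : AEStronglyMeasurable f μ) (hf01 : ∀ ω, f ω = 0 ∨ f ω = 1) : Integrable f μ :=
  .of_bound hf 1 (ae_of_all _ fun ω ↦ by rcases hf01 ω with h | h <;> simp [h])

theorem integrable_select {z a b : Ω → ℝ} (hz : AEStronglyMeasurable z μ)
    (hz01 : ∀ ω, z ω = 0 ∨ z ω = 1) (ha : Integrable a μ) (hb : Integrable b μ) :
    Integrable (select z a b) μ :=
  (ha.bdd_mul hz (c := 1) (ae_of_all _ fun ω ↦ by rcases hz01 ω with h | h <;> simp [h])).add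
    (hb.bdd_mul (aestronglyMeasurable_const.sub hz) (c := 1)
      (ae_of_all _ fun ω ↦ by rcases hz01 ω with h | h <;> simp [h]))

theorem indicator_lt_ae_eq_sub {D₁ D₀ : Ω → ℝ} (hD₁ : ∀ ω, D₁ ω = 0 ∨ D₁ ω = 1)
    (hD₀ : ∀ ω, D₀ ω = 0 ∨ D₀ ω = 1) (hle : ∀ᵐ ω ∂μ, D₀ ω ≤ D₁ ω) :
    {ω | D₀ ω < D₁ ω}.indicator (fun _ ↦ (1 : ℝ)) =ᵐ[μ] D₁ - D₀ := by
  filter_upwards [hle] with ω hω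
  by_cases hlt : D₀ ω < D₁ ω
  · rw [Set.indicator_of_mem (s := {ω | D₀ ω < D₁ ω}) hlt]
    rcases hD₁ ω with h₁ | h₁ <;> rcases hD₀ ω with h₀ | h₀ <;> simp only [Pi.sub_apply] <;>
      linarith
  · rw [Set.indicator_of_notMem (s := {ω | D₀ ω < D₁ ω}) hlt]
    rcases hD₁ ω with h₁ | h₁ <;> rcases hD₀ ω with h₀ | h₀ <;> simp only [Pi.sub_apply] <;>
      linarith [not_lt.mp hlt]

theorem sub_mul_indicator_lt_ae_eq_select_sub_select {D₁ D₀ : Ω → ℝ} (Y₁ Y₀ : Ω → ℝ)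
    (hD₁ : ∀ ω, D₁ ω = 0 ∨ D₁ ω = 1) (hD₀ : ∀ ω, D₀ ω = 0 ∨ D₀ ω = 1)
    (hle : ∀ᵐ ω ∂μ, D₀ ω ≤ D₁ ω) :
    (fun ω ↦ (Y₁ ω - Y₀ ω) * {ω | D₀ ω < D₁ ω}.indicator (fun _ ↦ (1 : ℝ)) ω)
      =ᵐ[μ] select D₁ Y₁ Y₀ - select D₀ Y₁ Y₀ := by
  rw [select_sub_select]
  filter_upwards [indicator_lt_ae_eq_sub hD₁ hD₀ hle] with ω hω
  rw [Pi.mul_apply, hω, Pi.sub_apply, Pi.sub_apply, mul_comm]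

end Select

section CondIndepFun

variable {Ω β γ : Type*} {m mΩ : MeasurableSpace Ω} [StandardBorelSpace Ω] {hm : m ≤ mΩ}
  {μ : Measure Ω} [IsFiniteMeasure μ] [MeasurableSpace β] [MeasurableSpace γ]

theorem CondIndepFun.congr_right {f : Ω → β} {g g' : Ω → γ} (h : CondIndepFun m hm f g μ)
    (hg : g =ᵐ[μ] g') : CondIndepFun m hm f g' μ :=
  Kernel.IndepFun.congr' h (ae_of_all _ fun _ ↦ .rfl)
    (Measure.ae_ae_of_ae_comp (by rwa [condExpKernel_comp_trim hm]))

theorem CondIndepFun.ae_indepFun_condExpKernel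
    [MeasurableSpace.CountableOrCountablyGenerated Ω (β × γ)] {f : Ω → β} {g : Ω → γ}
    (h : CondIndepFun m hm f g μ) (hf : Measurable f) (hg : Measurable g) :
    ∀ᵐ ω ∂μ, IndepFun f g (condExpKernel μ m ω) := by
  rw [condIndepFun_iff_map_prod_eq_prod_map_map hf hg] at h
  filter_upwards [ae_of_ae_trim hm h] with ω hω
  rw [indepFun_iff_map_prod_eq_prod_map_map hf.aemeasurable hg.aemeasurable]
  simpa [Kernel.map_apply _ hf, Kernel.map_apply _ hg, Kernel.map_apply _ (hf.prodMk hg),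
    Kernel.prod_apply] using hω

/-- Both sides are integrals against the regular conditional probability `condExpKernel μ m ω`,
under which `X` and `Y` are independent for a.e. `ω`. -/
theorem CondIndepFun.condExp_mul_eq_mul_condExp [Nonempty Ω] {X Y : Ω → ℝ}
    (h : CondIndepFun m hm X Y μ) (hX : Integrable X μ) (hY : Integrable Y μ)
    (hXY : Integrable (X * Y) μ) :
    μ[X * Y|m] =ᵐ[μ] μ[X|m] * μ[Y|m] := by
  obtain ⟨X', hX'm, hXX'⟩ := hX.aemeasurable
  obtain ⟨Y', hY'm, hYY'⟩ := hY.aemeasurable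
  have h' : CondIndepFun m hm X' Y' μ :=
    (CondIndepFun.congr_right (CondIndepFun.congr_right h hYY').symm hXX').symm
  filter_upwards [condExp_congr_ae (hXX'.mul hYY'), condExp_congr_ae hXX', condExp_congr_ae hYY',
    condExp_ae_eq_integral_condExpKernel hm (hXY.congr (hXX'.mul hYY')),
    condExp_ae_eq_integral_condExpKernel hm (hX.congr hXX'),
    condExp_ae_eq_integral_condExpKernel hm (hY.congr hYY'),
    CondIndepFun.ae_indepFun_condExpKernel h' hX'm hY'm] with ω hXY' hX' hY' hXYω hXω hYω hω
  rw [Pi.mul_apply, hXY', hX', hY', hXYω, hXω, hYω]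
  exact hω.integral_mul_eq_mul_integral hX'm.aestronglyMeasurable hY'm.aestronglyMeasurable

theorem CondIndepFun.condExp_select_sub_condExp_select [Nonempty Ω] {z₁ z₀ a b : Ω → ℝ}
    (h : CondIndepFun m hm (fun ω ↦ (z₁ ω, z₀ ω)) (fun ω ↦ (a ω, b ω)) μ)
    (hz₁ : AEStronglyMeasurable z₁ μ) (hz₀ : AEStronglyMeasurable z₀ μ)
    (hz₁01 : ∀ ω, z₁ ω = 0 ∨ z₁ ω = 1) (hz₀01 : ∀ ω, z₀ ω = 0 ∨ z₀ ω = 1)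
    (ha : Integrable a μ) (hb : Integrable b μ) :
    μ[select z₁ a b|m] - μ[select z₀ a b|m] =ᵐ[μ] (μ[z₁|m] - μ[z₀|m]) * μ[a - b|m] := by
  have hsel₁ := integrable_select hz₁ hz₁01 ha hb
  have hsel₀ := integrable_select hz₀ hz₀01 ha hb
  have hz₁i := integrable_of_eq_zero_or_eq_one hz₁ hz₁01
  have hz₀i := integrable_of_eq_zero_or_eq_one hz₀ hz₀01
  have hind : CondIndepFun m hm (z₁ - z₀) (a - b) μ :=
    CondIndepFun.comp h (φ := fun p : ℝ × ℝ ↦ p.1 - p.2) (ψ := fun p : ℝ × ℝ ↦ p.1 - p.2)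
      (by fun_prop) (by fun_prop)
  calc μ[select z₁ a b|m] - μ[select z₀ a b|m]
      =ᵐ[μ] μ[(z₁ - z₀) * (a - b)|m] := by
        rw [← select_sub_select]; exact (condExp_sub hsel₁ hsel₀ m).symm
    _ =ᵐ[μ] μ[z₁ - z₀|m] * μ[a - b|m] :=
        CondIndepFun.condExp_mul_eq_mul_condExp hind (hz₁i.sub hz₀i) (ha.sub hb)
          (select_sub_select z₁ z₀ a b ▸ hsel₁.sub hsel₀)
    _ =ᵐ[μ] (μ[z₁|m] - μ[z₀|m]) * μ[a - b|m] :=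
        (condExp_sub hz₁i hz₀i m).mul .rfl

end CondIndepFun

theorem late_identification_general
    {Ω : Type*} [mΩ : MeasurableSpace Ω] [StandardBorelSpace Ω] [Nonempty Ω]
    (P : Measure Ω) [IsProbabilityMeasure P]
    (D1 D0 Z1 Z0 Y1 Y0 : Ω → ℝ)
    (hD1 : Measurable D1) (hD0 : Measurable D0)
    (hZ1 : Measurable Z1) (hZ0 : Measurable Z0)
    (hD1b : ∀ ω, D1 ω = 0 ∨ D1 ω = 1) (hD0b : ∀ ω, D0 ω = 0 ∨ D0 ω = 1)
    (hZ1b : ∀ ω, Z1 ω = 0 ∨ Z1 ω = 1) (hZ0b : ∀ ω, Z0 ω = 0 ∨ Z0 ω = 1)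
    (hY1 : Integrable Y1 P) (hY0 : Integrable Y0 P)
    (m : MeasurableSpace Ω)
    (hm : m ≤ mΩ)
    (Dk1 Dk0 Yk1 Yk0 : Ω → ℝ)
    (hDk1 : Dk1 = fun ω => Z1 ω * D1 ω + (1 - Z1 ω) * D0 ω)
    (hDk0 : Dk0 = fun ω => Z0 ω * D1 ω + (1 - Z0 ω) * D0 ω)
    (hYk1 : Yk1 = fun ω => Dk1 ω * Y1 ω + (1 - Dk1 ω) * Y0 ω)
    (hYk0 : Yk0 = fun ω => Dk0 ω * Y1 ω + (1 - Dk0 ω) * Y0 ω)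
    (hindep : CondIndepFun m hm (fun ω => (Z1 ω, Z0 ω))
      (fun ω => (Y1 ω, Y0 ω, D1 ω, D0 ω)) P)
    (hmono : ∀ᵐ ω ∂P, D0 ω ≤ D1 ω) :
    ∀ᵐ ω ∂P,
      ((P[Yk1|m]) ω - (P[Yk0|m]) ω)
          * (P[({ω | D0 ω < D1 ω}.indicator (fun _ => (1:ℝ)))|m]) ω
        = ((P[Dk1|m]) ω - (P[Dk0|m]) ω)
          * (P[(fun ω => (Y1 ω - Y0 ω) * {ω | D0 ω < D1 ω}.indicator (fun _ => (1:ℝ)) ω)|m]) ω := by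
  obtain rfl : Dk1 = select Z1 D1 D0 := hDk1
  obtain rfl : Dk0 = select Z0 D1 D0 := hDk0
  obtain rfl : Yk1 = select Z1 (select D1 Y1 Y0) (select D0 Y1 Y0) := by
    rw [hYk1, ← select_select]; rfl
  obtain rfl : Yk0 = select Z0 (select D1 Y1 Y0) (select D0 Y1 Y0) := by
    rw [hYk0, ← select_select]; rfl
  have hindD : CondIndepFun m hm (fun ω ↦ (Z1 ω, Z0 ω)) (fun ω ↦ (D1 ω, D0 ω)) P :=
    CondIndepFun.comp hindep measurable_id
      (ψ := fun w : ℝ × ℝ × ℝ × ℝ ↦ (w.2.2.1, w.2.2.2)) (by fun_prop)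
  have hindY : CondIndepFun m hm (fun ω ↦ (Z1 ω, Z0 ω))
      (fun ω ↦ (select D1 Y1 Y0 ω, select D0 Y1 Y0 ω)) P :=
    CondIndepFun.comp hindep measurable_id
      (ψ := fun w : ℝ × ℝ × ℝ × ℝ ↦ (w.2.2.1 * w.1 + (1 - w.2.2.1) * w.2.1,
        w.2.2.2 * w.1 + (1 - w.2.2.2) * w.2.1)) (by fun_prop)
  have hD := CondIndepFun.condExp_select_sub_condExp_select hindD
    hZ1.aestronglyMeasurable hZ0.aestronglyMeasurable hZ1b hZ0b
    (integrable_of_eq_zero_or_eq_one hD1.aestronglyMeasurable hD1b)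
    (integrable_of_eq_zero_or_eq_one hD0.aestronglyMeasurable hD0b)
  have hY := CondIndepFun.condExp_select_sub_condExp_select hindY
    hZ1.aestronglyMeasurable hZ0.aestronglyMeasurable hZ1b hZ0b
    (integrable_select hD1.aestronglyMeasurable hD1b hY1 hY0)
    (integrable_select hD0.aestronglyMeasurable hD0b hY1 hY0)
  have hI := indicator_lt_ae_eq_sub hD1b hD0b hmono
  have hE := sub_mul_indicator_lt_ae_eq_select_sub_select Y1 Y0 hD1b hD0b hmono
  filter_upwards [hD, hY, condExp_congr_ae hI, condExp_congr_ae hE] with ω hDω hYω hIω hEω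
  rw [← Pi.sub_apply P[_|m], hYω, ← Pi.sub_apply P[_|m], hDω, hIω, hEω]
  simp only [Pi.mul_apply]
  ring

/-- **Identification of LATE in the two-regime design** (Theorem 1).
Under conditional independence of the assignment indicators `(Z¹, Z⁰)` from the potential
variables `(Y₁, Y₀, D₁, D₀)` given the covariate σ-algebra `m = σ(X)` and monotonicity
`D₀ ≤ D₁` a.s., we have, `P`-a.e.,
`(E[Y¹|m] − E[Y⁰|m]) · E[1{D₁>D₀}|m] = (E[D¹|m] − E[D⁰|m]) · E[(Y₁−Y₀)·1{D₁>D₀}|m]`. -/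
theorem late_identification
    {Ω 𝒳 : Type*} [mΩ : MeasurableSpace Ω] [StandardBorelSpace Ω] [Nonempty Ω]
    [MeasurableSpace 𝒳]
    (P : Measure Ω) [IsProbabilityMeasure P]
    (X : Ω → 𝒳) (hX : Measurable X)
    (D1 D0 Z1 Z0 Y1 Y0 : Ω → ℝ)
    (hD1 : Measurable D1) (hD0 : Measurable D0)
    (hZ1 : Measurable Z1) (hZ0 : Measurable Z0)
    (hD1b : ∀ ω, D1 ω = 0 ∨ D1 ω = 1) (hD0b : ∀ ω, D0 ω = 0 ∨ D0 ω = 1)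
    (hZ1b : ∀ ω, Z1 ω = 0 ∨ Z1 ω = 1) (hZ0b : ∀ ω, Z0 ω = 0 ∨ Z0 ω = 1)
    (hY1 : Integrable Y1 P) (hY0 : Integrable Y0 P)
    (m : MeasurableSpace Ω)
    (hm_def : m = MeasurableSpace.comap X inferInstance)
    (hm : m ≤ mΩ)
    (Dk1 Dk0 Yk1 Yk0 : Ω → ℝ)
    (hDk1 : Dk1 = fun ω => Z1 ω * D1 ω + (1 - Z1 ω) * D0 ω)
    (hDk0 : Dk0 = fun ω => Z0 ω * D1 ω + (1 - Z0 ω) * D0 ω)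
    (hYk1 : Yk1 = fun ω => Dk1 ω * Y1 ω + (1 - Dk1 ω) * Y0 ω)
    (hYk0 : Yk0 = fun ω => Dk0 ω * Y1 ω + (1 - Dk0 ω) * Y0 ω)
    (hindep : CondIndepFun m hm (fun ω => (Z1 ω, Z0 ω))
      (fun ω => (Y1 ω, Y0 ω, D1 ω, D0 ω)) P)
    (hmono : ∀ᵐ ω ∂P, D0 ω ≤ D1 ω) :
    ∀ᵐ ω ∂P,
      ((P[Yk1|m]) ω - (P[Yk0|m]) ω)
          * (P[({ω | D0 ω < D1 ω}.indicator (fun _ => (1:ℝ)))|m]) ω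
        = ((P[Dk1|m]) ω - (P[Dk0|m]) ω)
          * (P[(fun ω => (Y1 ω - Y0 ω) * {ω | D0 ω < D1 ω}.indicator (fun _ => (1:ℝ)) ω)|m]) ω :=
  late_identification_general (mΩ := mΩ) P D1 D0 Z1 Z0 Y1 Y0 hD1 hD0 hZ1 hZ0 hD1b hD0b hZ1b hZ0b hY1
    hY0 m hm Dk1 Dk0 Yk1 Yk0 hDk1 hDk0 hYk1 hYk0 hindep hmono
end

section
/- Let (Ω, F, P) be a probability space, m = σ(X) the σ-algebra generated by a measurable map X, and D₁, D₀, Z¹, Z⁰ : Ω → {0,1} measurable. Define D^k := Z^k·D₁ + (1−Z^k)·D₀ for k = 0,1. If the pair (Z¹, Z⁰) is conditionally independent of the pair (D₁, D₀) given m, then P-almost everywhere E[D¹ | m] − E[D⁰ | m] = E[Z¹ − Z⁰ | m] · E[D₁ − D₀ | m]. -/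
open MeasureTheory ProbabilityTheory

/-!
Pointwise, `D¹ − D⁰ = (Z¹ − Z⁰)(D₁ − D₀)`, and conditional independence of the pairs passes to
these two differences. Conditional expectations given `m` are integrals against the conditional
kernel, under which, for almost every `ω`, conditional independence makes the joint law of two
random variables the product of their laws, so the integral of their product splits.
-/

theorem ProbabilityTheory.CondIndepFun.condExp_mul
    {Ω : Type*} {m mΩ : MeasurableSpace Ω} [StandardBorelSpace Ω] {hm : m ≤ mΩ}
    {μ : Measure Ω} [IsFiniteMeasure μ] {f g : Ω → ℝ}
    (hfg : CondIndepFun m hm f g μ) (hf : Measurable f) (hg : Measurable g)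
    (hf_int : Integrable f μ) (hg_int : Integrable g μ) (hfg_int : Integrable (f * g) μ) :
    μ[f * g|m] =ᵐ[μ] μ[f|m] * μ[g|m] := by
  have h_prod := ae_of_ae_trim hm <|
    (condIndepFun_iff_map_prod_eq_prod_map_map hf hg).mp hfg
  filter_upwards [h_prod, condExp_ae_eq_integral_condExpKernel hm hfg_int,
    condExp_ae_eq_integral_condExpKernel hm hf_int,
    condExp_ae_eq_integral_condExpKernel hm hg_int] with ω hω hfgω hfω hgω
  rw [hfgω, Pi.mul_apply, hfω, hgω]
  calc ∫ y, (f * g) y ∂condExpKernel μ m ω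
      = ∫ z, z.1 * z.2 ∂(condExpKernel μ m).map (fun y ↦ (f y, g y)) ω := by
        rw [Kernel.map_apply _ (hf.prodMk hg), integral_map (hf.prodMk hg).aemeasurable
          (by fun_prop)]
        rfl
    _ = ∫ z, z.1 * z.2 ∂((condExpKernel μ m).map f ω).prod ((condExpKernel μ m).map g ω) := by
        rw [hω, Kernel.prod_apply]
    _ = (∫ y, f y ∂condExpKernel μ m ω) * ∫ y, g y ∂condExpKernel μ m ω := by
        rw [integral_prod_mul (fun x : ℝ ↦ x) (fun x : ℝ ↦ x), Kernel.map_apply _ hf,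
          Kernel.map_apply _ hg, integral_map hf.aemeasurable (by fun_prop),
          integral_map hg.aemeasurable (by fun_prop)]

lemma abs_sub_le_one_of_zero_or_one {a b : ℝ} (ha : a = 0 ∨ a = 1) (hb : b = 0 ∨ b = 1) :
    |a - b| ≤ 1 := by
  rcases ha with rfl | rfl <;> rcases hb with rfl | rfl <;> norm_num

lemma abs_mul_add_one_sub_mul_le_one_of_zero_or_one {z a b : ℝ} (hz : z = 0 ∨ z = 1)
    (ha : a = 0 ∨ a = 1) (hb : b = 0 ∨ b = 1) : |z * a + (1 - z) * b| ≤ 1 := by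
  rcases hz with rfl | rfl <;> rcases ha with rfl | rfl <;> rcases hb with rfl | rfl <;> norm_num

theorem treatment_difference_factorization_general
    {Ω : Type*} [mΩ : MeasurableSpace Ω] [StandardBorelSpace Ω]
    (P : Measure Ω) [IsProbabilityMeasure P]
    (D1 D0 Z1 Z0 : Ω → ℝ)
    (hD1 : Measurable D1) (hD0 : Measurable D0)
    (hZ1 : Measurable Z1) (hZ0 : Measurable Z0)
    (hD1b : ∀ ω, D1 ω = 0 ∨ D1 ω = 1) (hD0b : ∀ ω, D0 ω = 0 ∨ D0 ω = 1)
    (hZ1b : ∀ ω, Z1 ω = 0 ∨ Z1 ω = 1) (hZ0b : ∀ ω, Z0 ω = 0 ∨ Z0 ω = 1)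
    (m : MeasurableSpace Ω)
    (hm : m ≤ mΩ)
    (Dk1 Dk0 : Ω → ℝ)
    (hDk1 : Dk1 = fun ω => Z1 ω * D1 ω + (1 - Z1 ω) * D0 ω)
    (hDk0 : Dk0 = fun ω => Z0 ω * D1 ω + (1 - Z0 ω) * D0 ω)
    (hindep : CondIndepFun m hm (fun ω => (Z1 ω, Z0 ω)) (fun ω => (D1 ω, D0 ω)) P) :
    ∀ᵐ ω ∂P,
      (P[Dk1|m]) ω - (P[Dk0|m]) ω
        = (P[(fun ω => Z1 ω - Z0 ω)|m]) ω * (P[(fun ω => D1 ω - D0 ω)|m]) ω := by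
  have integrable_of_abs_le_one {h : Ω → ℝ} (hh : Measurable[mΩ] h) (hb : ∀ ω, |h ω| ≤ 1) :
      Integrable h P :=
    .of_bound hh.aestronglyMeasurable 1 (ae_of_all _ hb)
  set ΔZ : Ω → ℝ := fun ω ↦ Z1 ω - Z0 ω
  set ΔD : Ω → ℝ := fun ω ↦ D1 ω - D0 ω
  have hΔZ : ∀ ω, |ΔZ ω| ≤ 1 := fun ω ↦ abs_sub_le_one_of_zero_or_one (hZ1b ω) (hZ0b ω)
  have hΔD : ∀ ω, |ΔD ω| ≤ 1 := fun ω ↦ abs_sub_le_one_of_zero_or_one (hD1b ω) (hD0b ω)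
  have h_indep : CondIndepFun m hm ΔZ ΔD P :=
    hindep.comp measurable_sub measurable_sub
  have h_diff : Dk1 - Dk0 = ΔZ * ΔD := by
    ext ω; simp only [hDk1, hDk0, Pi.sub_apply, Pi.mul_apply, ΔZ, ΔD]; ring
  have hDk1_int : Integrable Dk1 P := hDk1 ▸ integrable_of_abs_le_one (by fun_prop)
    fun ω ↦ abs_mul_add_one_sub_mul_le_one_of_zero_or_one (hZ1b ω) (hD1b ω) (hD0b ω)
  have hDk0_int : Integrable Dk0 P := hDk0 ▸ integrable_of_abs_le_one (by fun_prop)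
    fun ω ↦ abs_mul_add_one_sub_mul_le_one_of_zero_or_one (hZ0b ω) (hD1b ω) (hD0b ω)
  have h_mul := h_indep.condExp_mul (hZ1.sub hZ0) (hD1.sub hD0)
    (integrable_of_abs_le_one (hZ1.sub hZ0) hΔZ) (integrable_of_abs_le_one (hD1.sub hD0) hΔD)
    (integrable_of_abs_le_one ((hZ1.sub hZ0).mul (hD1.sub hD0)) fun ω ↦ by
      rw [Pi.mul_apply, abs_mul]; exact mul_le_one₀ (hΔZ ω) (abs_nonneg _) (hΔD ω))
  filter_upwards [condExp_sub hDk1_int hDk0_int m, h_mul] with ω h_sub h_mulω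
  rw [← Pi.sub_apply, ← h_sub, h_diff, h_mulω, Pi.mul_apply]

/-- In the two-regime design, if `(Z¹, Z⁰)` is conditionally independent of `(D₁, D₀)`
given `m = σ(X)`, then `P`-a.e.
`E[D¹|m] − E[D⁰|m] = E[Z¹ − Z⁰|m] · E[D₁ − D₀|m]`. -/
theorem treatment_difference_factorization
    {Ω 𝒳 : Type*} [mΩ : MeasurableSpace Ω] [StandardBorelSpace Ω] [Nonempty Ω]
    [MeasurableSpace 𝒳]
    (P : Measure Ω) [IsProbabilityMeasure P]
    (X : Ω → 𝒳) (hX : Measurable X)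
    (D1 D0 Z1 Z0 : Ω → ℝ)
    (hD1 : Measurable D1) (hD0 : Measurable D0)
    (hZ1 : Measurable Z1) (hZ0 : Measurable Z0)
    (hD1b : ∀ ω, D1 ω = 0 ∨ D1 ω = 1) (hD0b : ∀ ω, D0 ω = 0 ∨ D0 ω = 1)
    (hZ1b : ∀ ω, Z1 ω = 0 ∨ Z1 ω = 1) (hZ0b : ∀ ω, Z0 ω = 0 ∨ Z0 ω = 1)
    (m : MeasurableSpace Ω)
    (hm_def : m = MeasurableSpace.comap X inferInstance)
    (hm : m ≤ mΩ)
    (Dk1 Dk0 : Ω → ℝ)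
    (hDk1 : Dk1 = fun ω => Z1 ω * D1 ω + (1 - Z1 ω) * D0 ω)
    (hDk0 : Dk0 = fun ω => Z0 ω * D1 ω + (1 - Z0 ω) * D0 ω)
    (hindep : CondIndepFun m hm (fun ω => (Z1 ω, Z0 ω)) (fun ω => (D1 ω, D0 ω)) P) :
    ∀ᵐ ω ∂P,
      (P[Dk1|m]) ω - (P[Dk0|m]) ω
        = (P[(fun ω => Z1 ω - Z0 ω)|m]) ω * (P[(fun ω => D1 ω - D0 ω)|m]) ω :=
  treatment_difference_factorization_general (mΩ := mΩ) P D1 D0 Z1 Z0 hD1 hD0 hZ1 hZ0 hD1b hD0b hZ1b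
    hZ0b m hm Dk1 Dk0 hDk1 hDk0 hindep
end

section
/- Let (Ω, F, P) be a probability space, m = σ(X) the σ-algebra generated by a measurable map X, D₁, D₀, Z¹, Z⁰ : Ω → {0,1} measurable, and Y₁, Y₀ ∈ L¹(P). Define D^k := Z^k·D₁ + (1−Z^k)·D₀ and Y^k := D^k·Y₁ + (1−D^k)·Y₀ for k = 0,1. Assume the pair (Z¹, Z⁰) is conditionally independent of the quadruple (Y₁, Y₀, D₁, D₀) given m and D₁ ≥ D₀ almost surely. Then P-almost everywhere E[Y¹ | m] − E[Y⁰ | m] = E[Z¹ − Z⁰ | m] · E[(Y₁ − Y₀)·1{D₁ > D₀} | m]. -/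
/-!
By monotonicity, `D₁ - D₀ = 1{D₀ < D₁}`, so in regime `Z` the observed outcome is
`Y₀ + D₀ (Y₁ - Y₀) + Z G` with `G = (Y₁ - Y₀) 1{D₀ < D₁}` a function of `B = (Y₁, Y₀, D₁, D₀)`.
The first two terms do not depend on the regime, and conditional independence factorizes
`E[Z G | m] = E[Z | m] E[G | m]`: conditioning first on `m ⊔ σ(B)`, the indicator `Z` has the same
conditional expectation given `m ⊔ σ(B)` as given `m`, which is checked on the π-system of
sets `u ∩ B⁻¹ t`.
-/

open MeasureTheory ProbabilityTheory Set Filter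

section PiSystem

variable {Ω γ : Type*} {m : MeasurableSpace Ω} [mγ : MeasurableSpace γ] {B : Ω → γ}

lemma isPiSystem_inter_preimage :
    IsPiSystem {v | ∃ u t, MeasurableSet[m] u ∧ MeasurableSet t ∧ v = u ∩ B ⁻¹' t} := by
  rintro _ ⟨u₁, t₁, hu₁, ht₁, rfl⟩ _ ⟨u₂, t₂, hu₂, ht₂, rfl⟩ -
  exact ⟨u₁ ∩ u₂, t₁ ∩ t₂, hu₁.inter hu₂, ht₁.inter ht₂, by rw [preimage_inter]; ac_rfl⟩

lemma sup_comap_eq_generateFrom_inter_preimage :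
    m ⊔ mγ.comap B = MeasurableSpace.generateFrom
      {v | ∃ u t, MeasurableSet[m] u ∧ MeasurableSet t ∧ v = u ∩ B ⁻¹' t} := by
  refine le_antisymm (sup_le (fun u hu => ?_) ?_) (MeasurableSpace.generateFrom_le ?_)
  · exact .basic _ ⟨u, univ, hu, .univ, by simp⟩
  · rintro _ ⟨t, ht, rfl⟩
    exact .basic _ ⟨univ, t, .univ, ht, by simp⟩
  · rintro _ ⟨u, t, hu, ht, rfl⟩
    exact (le_sup_left (b := mγ.comap B) _ hu).inter (le_sup_right (a := m) _ ⟨t, ht, rfl⟩)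

end PiSystem

lemma ae_norm_condExp_indicator_le_one {Ω : Type*} {m mΩ : MeasurableSpace Ω} {μ : Measure Ω}
    (S : Set Ω) : ∀ᵐ ω ∂μ, ‖(μ⟦S | m⟧) ω‖ ≤ 1 := by
  have h := ae_bdd_abs_condExp_of_ae_bdd_abs (μ := μ) (m := m) (R := (1 : ℝ))
    (f := S.indicator fun _ => 1) (.of_forall fun ω => by by_cases hω : ω ∈ S <;> simp [hω])
  simpa only [Real.norm_eq_abs] using h

section CondIndepFun

variable {Ω β γ : Type*} {m mΩ : MeasurableSpace Ω} [StandardBorelSpace Ω]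
  [MeasurableSpace β] [mγ : MeasurableSpace γ] {hm : m ≤ mΩ}
  {μ : Measure Ω} [IsFiniteMeasure μ] {A : Ω → β} {B : Ω → γ}

theorem ProbabilityTheory.CondIndepFun.congr_right {B' : Ω → γ} (h : CondIndepFun m hm A B μ)
    (hB : B =ᵐ[μ] B') : CondIndepFun m hm A B' μ := by
  rw [← condExpKernel_comp_trim (μ := μ) hm] at hB
  exact Kernel.IndepFun.congr' h (.of_forall fun _ => .rfl) (Measure.ae_ae_of_ae_comp hB)

lemma setIntegral_condExp_indicator_inter_preimage (h : CondIndepFun m hm A B μ)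
    (hA : Measurable A) (hB : Measurable B) {s : Set β} (hs : MeasurableSet s)
    {u : Set Ω} (hu : MeasurableSet[m] u) {t : Set γ} (ht : MeasurableSet t) :
    ∫ ω in u ∩ B ⁻¹' t, (μ⟦A ⁻¹' s | m⟧) ω ∂μ
      = ∫ ω in u ∩ B ⁻¹' t, (A ⁻¹' s).indicator (fun _ => 1) ω ∂μ := by
  set g := μ⟦A ⁻¹' s | m⟧
  have hpull : μ[(B ⁻¹' t).indicator g | m] =ᵐ[μ] g * μ⟦B ⁻¹' t | m⟧ := by
    have hg : (B ⁻¹' t).indicator g = g * (B ⁻¹' t).indicator fun _ => 1 := by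
      ext ω; by_cases hω : ω ∈ B ⁻¹' t <;> simp [hω]
    rw [hg]
    exact condExp_stronglyMeasurable_mul_of_bound hm stronglyMeasurable_condExp
      ((integrable_const 1).indicator (hB ht)) 1 (ae_norm_condExp_indicator_le_one _)
  have hindep := (condIndepFun_iff_condExp_inter_preimage_eq_mul hA hB).mp h s t hs ht
  calc ∫ ω in u ∩ B ⁻¹' t, g ω ∂μ = ∫ ω in u, (B ⁻¹' t).indicator g ω ∂μ :=
        (setIntegral_indicator (hB ht)).symm
    _ = ∫ ω in u, μ[(B ⁻¹' t).indicator g | m] ω ∂μ :=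
        (setIntegral_condExp hm (integrable_condExp.indicator (hB ht)) hu).symm
    _ = ∫ ω in u, (μ⟦A ⁻¹' s ∩ B ⁻¹' t | m⟧) ω ∂μ := by
        refine setIntegral_congr_ae (hm u hu) ?_
        filter_upwards [hpull, hindep] with ω h₁ h₂ _
        rw [h₁, h₂, Pi.mul_apply]
    _ = ∫ ω in u, (B ⁻¹' t).indicator ((A ⁻¹' s).indicator fun _ => 1) ω ∂μ := by
        rw [setIntegral_condExp hm ((integrable_const 1).indicator ((hA hs).inter (hB ht))) hu,
          indicator_indicator, inter_comm]
    _ = ∫ ω in u ∩ B ⁻¹' t, (A ⁻¹' s).indicator (fun _ => 1) ω ∂μ :=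
        setIntegral_indicator (hB ht)

lemma condExp_indicator_sup_comap_ae_eq (h : CondIndepFun m hm A B μ)
    (hA : Measurable A) (hB : Measurable B) {s : Set β} (hs : MeasurableSet s) :
    μ[(A ⁻¹' s).indicator (fun _ => 1) | m ⊔ mγ.comap B] =ᵐ[μ] μ⟦A ⁻¹' s | m⟧ := by
  have hle : m ⊔ mγ.comap B ≤ mΩ := sup_le hm hB.comap_le
  have hf : Integrable ((A ⁻¹' s).indicator fun _ => (1 : ℝ)) μ :=
    (integrable_const 1).indicator (hA hs)
  have hsets : ∀ v, MeasurableSet[m ⊔ mγ.comap B] v →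
      ∫ ω in v, (μ⟦A ⁻¹' s | m⟧) ω ∂μ = ∫ ω in v, (A ⁻¹' s).indicator (fun _ => 1) ω ∂μ := by
    intro v hv
    induction v, hv using MeasurableSpace.induction_on_inter
      sup_comap_eq_generateFrom_inter_preimage isPiSystem_inter_preimage with
    | empty => simp
    | basic _ hv =>
      obtain ⟨u, t, hu, ht, rfl⟩ := hv
      exact setIntegral_condExp_indicator_inter_preimage h hA hB hs hu ht
    | compl v hv ih =>
      rw [setIntegral_compl (hle v hv) integrable_condExp, setIntegral_compl (hle v hv) hf,
        integral_condExp hm, ih]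
    | iUnion v hdisj hv ih =>
      rw [integral_iUnion (fun i => hle _ (hv i)) hdisj integrable_condExp.integrableOn,
        integral_iUnion (fun i => hle _ (hv i)) hdisj hf.integrableOn]
      exact tsum_congr ih
  exact (ae_eq_condExp_of_forall_setIntegral_eq hle hf
    (fun _ _ _ => integrable_condExp.integrableOn) (fun v hv _ => hsets v hv)
    (stronglyMeasurable_condExp.mono (le_sup_left : m ≤ m ⊔ mγ.comap B)).aestronglyMeasurable).symm

lemma condExp_indicator_mul_comp_of_condIndepFun (h : CondIndepFun m hm A B μ)
    (hA : Measurable A) (hB : Measurable B) {s : Set β} (hs : MeasurableSet s)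
    {ψ : γ → ℝ} (hψ : Measurable ψ) (hψB : Integrable (ψ ∘ B) μ) :
    μ[(A ⁻¹' s).indicator (fun _ => 1) * ψ ∘ B | m] =ᵐ[μ] μ⟦A ⁻¹' s | m⟧ * μ[ψ ∘ B | m] := by
  have hle : m ⊔ mγ.comap B ≤ mΩ := sup_le hm hB.comap_le
  have hψB_meas : StronglyMeasurable[m ⊔ mγ.comap B] (ψ ∘ B) :=
    ((hψ.comp (comap_measurable B)).mono (le_sup_right : mγ.comap B ≤ m ⊔ mγ.comap B)
      le_rfl).stronglyMeasurable
  have hprod : Integrable ((A ⁻¹' s).indicator (fun _ => 1) * ψ ∘ B) μ := by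
    have : (A ⁻¹' s).indicator (fun _ => 1) * ψ ∘ B = (A ⁻¹' s).indicator (ψ ∘ B) := by
      ext ω; by_cases hω : ω ∈ A ⁻¹' s <;> simp [hω]
    exact this ▸ hψB.indicator (hA hs)
  calc μ[(A ⁻¹' s).indicator (fun _ => 1) * ψ ∘ B | m]
      =ᵐ[μ] μ[μ[(A ⁻¹' s).indicator (fun _ => 1) * ψ ∘ B | m ⊔ mγ.comap B] | m] :=
        (condExp_condExp_of_le le_sup_left hle).symm
    _ =ᵐ[μ] μ[μ⟦A ⁻¹' s | m⟧ * ψ ∘ B | m] := by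
        refine condExp_congr_ae ?_
        filter_upwards [condExp_mul_of_stronglyMeasurable_right hψB_meas hprod
          ((integrable_const 1).indicator (hA hs)),
          condExp_indicator_sup_comap_ae_eq h hA hB hs] with ω h₁ h₂
        rw [h₁, Pi.mul_apply, h₂, Pi.mul_apply]
    _ =ᵐ[μ] μ⟦A ⁻¹' s | m⟧ * μ[ψ ∘ B | m] :=
        condExp_stronglyMeasurable_mul_of_bound hm stronglyMeasurable_condExp hψB 1
          (ae_norm_condExp_indicator_le_one _)

lemma condExp_indicator_mul_comp_of_condIndepFun₀ (h : CondIndepFun m hm A B μ)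
    (hA : Measurable A) (hB : AEMeasurable B μ) {s : Set β} (hs : MeasurableSet s)
    {ψ : γ → ℝ} (hψ : Measurable ψ) (hψB : Integrable (ψ ∘ B) μ) :
    μ[(A ⁻¹' s).indicator (fun _ => 1) * ψ ∘ B | m] =ᵐ[μ] μ⟦A ⁻¹' s | m⟧ * μ[ψ ∘ B | m] := by
  have hG : ψ ∘ B =ᵐ[μ] ψ ∘ hB.mk B := hB.ae_eq_mk.fun_comp ψ
  filter_upwards [condExp_indicator_mul_comp_of_condIndepFun (h.congr_right hB.ae_eq_mk) hA
      hB.measurable_mk hs hψ (hψB.congr hG),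
    condExp_congr_ae hG, condExp_congr_ae ((EventuallyEq.refl _ _).mul hG)] with ω h₁ h₂ h₃
  rw [h₃, h₁, Pi.mul_apply, Pi.mul_apply, h₂]

end CondIndepFun

lemma sub_eq_ite_lt_of_binary {a b : ℝ} (ha : a = 0 ∨ a = 1) (hb : b = 0 ∨ b = 1)
    (hba : b ≤ a) : a - b = if b < a then 1 else 0 := by
  rcases ha with rfl | rfl <;> rcases hb with rfl | rfl <;> norm_num at *

lemma norm_le_one_of_binary {x : ℝ} (hx : x = 0 ∨ x = 1) : ‖x‖ ≤ 1 := by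
  rcases hx with rfl | rfl <;> simp

lemma integrable_of_binary {Ω : Type*} {mΩ : MeasurableSpace Ω} {μ : Measure Ω} [IsFiniteMeasure μ]
    {f : Ω → ℝ} (hf : Measurable f) (hfb : ∀ ω, f ω = 0 ∨ f ω = 1) : Integrable f μ :=
  .of_bound hf.aestronglyMeasurable 1 (.of_forall fun ω => norm_le_one_of_binary (hfb ω))

section TwoRegime

variable {Ω : Type*} {m mΩ : MeasurableSpace Ω} [StandardBorelSpace Ω] {hm : m ≤ mΩ}
  {μ : Measure Ω} [IsFiniteMeasure μ] {Z D1 D0 Y1 Y0 : Ω → ℝ}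

lemma condExp_observed_outcome_ae_eq (hZ : Measurable Z) (hZb : ∀ ω, Z ω = 0 ∨ Z ω = 1)
    (hD1 : Measurable D1) (hD0 : Measurable D0)
    (hD1b : ∀ ω, D1 ω = 0 ∨ D1 ω = 1) (hD0b : ∀ ω, D0 ω = 0 ∨ D0 ω = 1)
    (hY1 : Integrable Y1 μ) (hY0 : Integrable Y0 μ)
    (hindep : CondIndepFun m hm Z (fun ω => (Y1 ω, Y0 ω, D1 ω, D0 ω)) μ)
    (hmono : ∀ᵐ ω ∂μ, D0 ω ≤ D1 ω) :
    μ[fun ω => (Z ω * D1 ω + (1 - Z ω) * D0 ω) * Y1 ω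
        + (1 - (Z ω * D1 ω + (1 - Z ω) * D0 ω)) * Y0 ω | m]
      =ᵐ[μ] μ[fun ω => Y0 ω + D0 ω * (Y1 ω - Y0 ω) | m] + μ[Z | m]
        * μ[fun ω => (Y1 ω - Y0 ω) * {ω | D0 ω < D1 ω}.indicator (fun _ => (1 : ℝ)) ω | m] := by
  set G := fun ω => (Y1 ω - Y0 ω) * {ω | D0 ω < D1 ω}.indicator (fun _ => (1 : ℝ)) ω
  -- `ψ ∘ (Y1, Y0, D1, D0)` is `G` by definition, which is how `hG` is used below.
  let ψ : ℝ × ℝ × ℝ × ℝ → ℝ := fun p =>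
    (p.1 - p.2.1) * {p : ℝ × ℝ × ℝ × ℝ | p.2.2.2 < p.2.2.1}.indicator (fun _ => 1) p
  have hψ : Measurable ψ := (measurable_fst.sub (measurable_fst.comp measurable_snd)).mul
    (measurable_const.indicator (measurableSet_lt (by fun_prop) (by fun_prop)))
  have hG : Integrable G μ :=
    (hY1.sub hY0).mul_bdd (c := 1)
      (measurable_const.indicator (measurableSet_lt hD0 hD1)).aestronglyMeasurable
      (.of_forall fun ω => (norm_indicator_le_norm_self _ _).trans_eq norm_one)
  have hZG : μ[Z * G | m] =ᵐ[μ] μ[Z | m] * μ[G | m] := by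
    have hZ_ind : (Z ⁻¹' {1}).indicator (fun _ => 1) = Z := by
      ext ω; rcases hZb ω with h | h <;> simp [h]
    have h := condExp_indicator_mul_comp_of_condIndepFun₀ hindep hZ (by fun_prop)
      (measurableSet_singleton 1) hψ hG
    rwa [hZ_ind] at h
  have hbase : Integrable (fun ω => Y0 ω + D0 ω * (Y1 ω - Y0 ω)) μ :=
    hY0.add ((hY1.sub hY0).bdd_mul hD0.aestronglyMeasurable
      (.of_forall fun ω => norm_le_one_of_binary (hD0b ω)))
  have hZG_int : Integrable (Z * G) μ :=
    hG.bdd_mul hZ.aestronglyMeasurable (.of_forall fun ω => norm_le_one_of_binary (hZb ω))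
  have hsplit : (fun ω => (Z ω * D1 ω + (1 - Z ω) * D0 ω) * Y1 ω
        + (1 - (Z ω * D1 ω + (1 - Z ω) * D0 ω)) * Y0 ω)
      =ᵐ[μ] (fun ω => Y0 ω + D0 ω * (Y1 ω - Y0 ω)) + Z * G := by
    filter_upwards [hmono] with ω hω
    simp only [G, Pi.add_apply, Pi.mul_apply, indicator_apply, mem_ofPred_eq,
      ← sub_eq_ite_lt_of_binary (hD1b ω) (hD0b ω) hω]
    ring
  filter_upwards [condExp_congr_ae hsplit, condExp_add hbase hZG_int m, hZG] with ω h₁ h₂ h₃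
  rw [h₁, h₂, Pi.add_apply, Pi.add_apply, h₃]

end TwoRegime

theorem outcome_difference_factorization_general
    {Ω : Type*} [mΩ : MeasurableSpace Ω] [StandardBorelSpace Ω]
    (P : Measure Ω) [IsProbabilityMeasure P]
    (D1 D0 Z1 Z0 Y1 Y0 : Ω → ℝ)
    (hD1 : Measurable D1) (hD0 : Measurable D0)
    (hZ1 : Measurable Z1) (hZ0 : Measurable Z0)
    (hD1b : ∀ ω, D1 ω = 0 ∨ D1 ω = 1) (hD0b : ∀ ω, D0 ω = 0 ∨ D0 ω = 1)
    (hZ1b : ∀ ω, Z1 ω = 0 ∨ Z1 ω = 1) (hZ0b : ∀ ω, Z0 ω = 0 ∨ Z0 ω = 1)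
    (hY1 : Integrable Y1 P) (hY0 : Integrable Y0 P)
    (m : MeasurableSpace Ω)
    (hm : m ≤ mΩ)
    (Dk1 Dk0 Yk1 Yk0 : Ω → ℝ)
    (hDk1 : Dk1 = fun ω => Z1 ω * D1 ω + (1 - Z1 ω) * D0 ω)
    (hDk0 : Dk0 = fun ω => Z0 ω * D1 ω + (1 - Z0 ω) * D0 ω)
    (hYk1 : Yk1 = fun ω => Dk1 ω * Y1 ω + (1 - Dk1 ω) * Y0 ω)
    (hYk0 : Yk0 = fun ω => Dk0 ω * Y1 ω + (1 - Dk0 ω) * Y0 ω)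
    (hindep : CondIndepFun m hm (fun ω => (Z1 ω, Z0 ω))
      (fun ω => (Y1 ω, Y0 ω, D1 ω, D0 ω)) P)
    (hmono : ∀ᵐ ω ∂P, D0 ω ≤ D1 ω) :
    ∀ᵐ ω ∂P,
      (P[Yk1|m]) ω - (P[Yk0|m]) ω
        = (P[(fun ω => Z1 ω - Z0 ω)|m]) ω
          * (P[(fun ω => (Y1 ω - Y0 ω) * {ω | D0 ω < D1 ω}.indicator (fun _ => (1:ℝ)) ω)|m]) ω := by
  subst hYk1 hYk0 hDk1 hDk0
  have h₁ := condExp_observed_outcome_ae_eq hZ1 hZ1b hD1 hD0 hD1b hD0b hY1 hY0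
    (hindep.comp measurable_fst measurable_id) hmono
  have h₀ := condExp_observed_outcome_ae_eq hZ0 hZ0b hD1 hD0 hD1b hD0b hY1 hY0
    (hindep.comp measurable_snd measurable_id) hmono
  have hZ := condExp_sub (integrable_of_binary (μ := P) hZ1 hZ1b)
    (integrable_of_binary hZ0 hZ0b) m
  filter_upwards [h₁, h₀, hZ] with ω e₁ e₀ eZ
  rw [e₁, e₀, show (fun ω => Z1 ω - Z0 ω) = Z1 - Z0 from rfl, eZ]
  simp only [Pi.add_apply, Pi.mul_apply, Pi.sub_apply]
  ring

/-- In the two-regime design, under conditional independence of `(Z¹, Z⁰)` and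
`(Y₁, Y₀, D₁, D₀)` given `m = σ(X)` and monotonicity `D₀ ≤ D₁` a.s., `P`-a.e.
`E[Y¹|m] − E[Y⁰|m] = E[Z¹ − Z⁰|m] · E[(Y₁ − Y₀)·1{D₁>D₀}|m]`. -/
theorem outcome_difference_factorization
    {Ω 𝒳 : Type*} [mΩ : MeasurableSpace Ω] [StandardBorelSpace Ω] [Nonempty Ω]
    [MeasurableSpace 𝒳]
    (P : Measure Ω) [IsProbabilityMeasure P]
    (X : Ω → 𝒳) (hX : Measurable X)
    (D1 D0 Z1 Z0 Y1 Y0 : Ω → ℝ)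
    (hD1 : Measurable D1) (hD0 : Measurable D0)
    (hZ1 : Measurable Z1) (hZ0 : Measurable Z0)
    (hD1b : ∀ ω, D1 ω = 0 ∨ D1 ω = 1) (hD0b : ∀ ω, D0 ω = 0 ∨ D0 ω = 1)
    (hZ1b : ∀ ω, Z1 ω = 0 ∨ Z1 ω = 1) (hZ0b : ∀ ω, Z0 ω = 0 ∨ Z0 ω = 1)
    (hY1 : Integrable Y1 P) (hY0 : Integrable Y0 P)
    (m : MeasurableSpace Ω)
    (hm_def : m = MeasurableSpace.comap X inferInstance)
    (hm : m ≤ mΩ)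
    (Dk1 Dk0 Yk1 Yk0 : Ω → ℝ)
    (hDk1 : Dk1 = fun ω => Z1 ω * D1 ω + (1 - Z1 ω) * D0 ω)
    (hDk0 : Dk0 = fun ω => Z0 ω * D1 ω + (1 - Z0 ω) * D0 ω)
    (hYk1 : Yk1 = fun ω => Dk1 ω * Y1 ω + (1 - Dk1 ω) * Y0 ω)
    (hYk0 : Yk0 = fun ω => Dk0 ω * Y1 ω + (1 - Dk0 ω) * Y0 ω)
    (hindep : CondIndepFun m hm (fun ω => (Z1 ω, Z0 ω))
      (fun ω => (Y1 ω, Y0 ω, D1 ω, D0 ω)) P)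
    (hmono : ∀ᵐ ω ∂P, D0 ω ≤ D1 ω) :
    ∀ᵐ ω ∂P,
      (P[Yk1|m]) ω - (P[Yk0|m]) ω
        = (P[(fun ω => Z1 ω - Z0 ω)|m]) ω
          * (P[(fun ω => (Y1 ω - Y0 ω) * {ω | D0 ω < D1 ω}.indicator (fun _ => (1:ℝ)) ω)|m]) ω :=
  outcome_difference_factorization_general (mΩ := mΩ) P D1 D0 Z1 Z0 Y1 Y0 hD1 hD0 hZ1 hZ0 hD1b hD0b
    hZ1b hZ0b hY1 hY0 m hm Dk1 Dk0 Yk1 Yk0 hDk1 hDk0 hYk1 hYk0 hindep hmono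
end

section
/- Let (Ω, F, P) be a probability space, m = σ(X) the σ-algebra generated by a measurable map X, D₁, D₀, Z¹, Z⁰ : Ω → {0,1} measurable, and Y₁, Y₀ ∈ L¹(P). Define D^k := Z^k·D₁ + (1−Z^k)·D₀ and Y^k := D^k·Y₁ + (1−D^k)·Y₀ for k = 0,1. Assume the pair (Z¹, Z⁰) is conditionally independent of (Y₁, Y₀, D₁, D₀) given m, D₁ ≥ D₀ almost surely, Z⁰ = 0 almost surely (one-experiment two-regime design), and D₀ = 0 almost surely (one-sided noncompliance). Then P-almost everywhere: (i) E[Y⁰ | m] = E[Y₀ | m], and (ii) (E[Y¹ | m] − E[Y⁰ | m]) · E[D₁ | m] = E[D¹ | m] · E[(Y₁ − Y₀)·D₁ | m]; in particular wherever E[D¹ | m] ≠ 0 and E[D₁ | m] ≠ 0 the local average treatment effect E[(Y₁−Y₀)·D₁ | m]/E[D₁ | m] equals (E[Y¹|m] − E[Y⁰|m]) / E[D¹|m]. -/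
open MeasureTheory ProbabilityTheory

/-!
Almost surely `Y⁰ = Y₀`, `D¹ = Z¹·D₁` and `Y¹ = Y₀ + Z¹·(Y₁ − Y₀)·D₁`, since `Z⁰ = 0` and
`D₀ = 0`. Given `m`, the `{0,1}`-valued `Z¹` is independent of `V = (Y₁ − Y₀)·D₁` and of
`V = D₁`, so `E[Z¹·V | m] = E[Z¹ | m]·E[V | m]` in both cases, and each side of (ii) becomes
`E[Z¹ | m]·E[(Y₁ − Y₀)·D₁ | m]·E[D₁ | m]`.

For `Z¹ = 1_A` with `A` conditionally independent of a σ-algebra `m₂` making `V` measurable, the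
factorisation is tested on `m`-measurable sets `s`: conditioning on `m₂` first turns `1_{A ∩ s}`
into `1_s·E[1_A | m]`, by the product rule for events.
-/

namespace ProbabilityTheory

variable {Ω : Type*} {m m₁ m₂ mΩ : MeasurableSpace Ω} {μ : Measure Ω}

lemma norm_condExp_indicator_le_one {A : Set Ω} : ∀ᵐ ω ∂μ, ‖(μ⟦A | m⟧) ω‖ ≤ 1 := by
  have h : ∀ᵐ ω ∂μ, |A.indicator (fun _ => (1 : ℝ)) ω| ≤ 1 :=
    ae_of_all _ fun ω => by by_cases hω : ω ∈ A <;> simp [hω]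
  simpa only [Real.norm_eq_abs] using ae_bdd_abs_condExp_of_ae_bdd_abs h

lemma condExp_congr_of_forall_setIntegral_eq {E : Type*} [NormedAddCommGroup E]
    [NormedSpace ℝ E] [CompleteSpace E] (hm : m ≤ mΩ) [SigmaFinite (μ.trim hm)] {f g : Ω → E}
    (hf : Integrable f μ) (hg : Integrable g μ)
    (hfg : ∀ s, MeasurableSet[m] s → ∫ ω in s, f ω ∂μ = ∫ ω in s, g ω ∂μ) :
    μ[f | m] =ᵐ[μ] μ[g | m] :=
  ae_eq_condExp_of_forall_setIntegral_eq hm hg (fun _ _ _ => integrable_condExp.integrableOn)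
    (fun s hs _ => by rw [setIntegral_condExp hm hf hs, hfg s hs])
    stronglyMeasurable_condExp.aestronglyMeasurable

lemma integral_mul_condExp_of_stronglyMeasurable (hm : m ≤ mΩ) [SigmaFinite (μ.trim hm)]
    {f g : Ω → ℝ} {C : ℝ} (hf : StronglyMeasurable[m] f) (hfi : Integrable f μ)
    (hg : Integrable g μ) (hgC : ∀ᵐ ω ∂μ, ‖g ω‖ ≤ C) :
    ∫ ω, f ω * μ[g | m] ω ∂μ = ∫ ω, f ω * g ω ∂μ := by
  rw [← integral_condExp hm (f := fun ω => f ω * g ω)]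
  exact integral_congr_ae (condExp_mul_of_stronglyMeasurable_left hf
    (hfi.mul_bdd hg.aestronglyMeasurable hgC) hg).symm

lemma CondIndep.condExp_indicator_inter_eq [StandardBorelSpace Ω] [IsFiniteMeasure μ]
    {hm : m ≤ mΩ} (hind : CondIndep m m₁ m₂ hm μ) (hm₁ : m₁ ≤ mΩ) (hm₂ : m₂ ≤ mΩ)
    {A s : Set Ω} (hA : MeasurableSet[m₁] A) (hs : MeasurableSet[m] s) :
    μ⟦A ∩ s | m₂⟧ =ᵐ[μ] μ[s.indicator (μ⟦A | m⟧) | m₂] := by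
  set e := μ⟦A | m⟧
  have he : StronglyMeasurable[m] e := stronglyMeasurable_condExp
  have hAΩ : MeasurableSet A := hm₁ _ hA
  have hsΩ : MeasurableSet s := hm _ hs
  refine condExp_congr_of_forall_setIntegral_eq hm₂
    ((integrable_const 1).indicator (hAΩ.inter hsΩ)) (integrable_condExp.indicator hsΩ)
    fun B hB => ?_
  have hBΩ : MeasurableSet B := hm₂ _ hB
  have h1B : Integrable (B.indicator fun _ => (1 : ℝ)) μ := (integrable_const 1).indicator hBΩ
  calc ∫ ω in B, (A ∩ s).indicator (fun _ => (1 : ℝ)) ω ∂μ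
      = ∫ ω in s, (A ∩ B).indicator (fun _ => (1 : ℝ)) ω ∂μ := by
        rw [setIntegral_indicator (hAΩ.inter hsΩ), setIntegral_indicator (hAΩ.inter hBΩ)]
        congr 2
        ac_rfl
    _ = ∫ ω in s, (e * μ⟦B | m⟧) ω ∂μ := by
        rw [← setIntegral_condExp hm ((integrable_const 1).indicator (hAΩ.inter hBΩ)) hs]
        exact setIntegral_congr_ae hsΩ
          (((condIndep_iff m m₁ m₂ hm hm₁ hm₂ μ).mp hind A B hA hB).mono fun ω hω _ => hω)
    _ = ∫ ω in s, e ω * B.indicator (fun _ => (1 : ℝ)) ω ∂μ := by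
        rw [← setIntegral_condExp hm
          (h1B.bdd_mul (he.mono hm).aestronglyMeasurable norm_condExp_indicator_le_one) hs]
        exact setIntegral_congr_ae hsΩ ((condExp_stronglyMeasurable_mul_of_bound hm he h1B 1
          norm_condExp_indicator_le_one).mono fun ω hω _ => hω.symm)
    _ = ∫ ω in B, s.indicator e ω ∂μ := by
        simp only [← Set.indicator_mul_right, mul_one]
        rw [setIntegral_indicator hsΩ, setIntegral_indicator hBΩ, Set.inter_comm]

theorem CondIndep.condExp_indicator_mul [StandardBorelSpace Ω] [IsFiniteMeasure μ]
    {hm : m ≤ mΩ} (hind : CondIndep m m₁ m₂ hm μ) (hm₁ : m₁ ≤ mΩ) (hm₂ : m₂ ≤ mΩ)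
    {A : Set Ω} (hA : MeasurableSet[m₁] A) {h : Ω → ℝ} (hh : StronglyMeasurable[m₂] h)
    (hhi : Integrable h μ) :
    μ[A.indicator h | m] =ᵐ[μ] μ⟦A | m⟧ * μ[h | m] := by
  set e := μ⟦A | m⟧
  have he : StronglyMeasurable[m] e := stronglyMeasurable_condExp
  have he_le : ∀ᵐ ω ∂μ, ‖e ω‖ ≤ 1 := norm_condExp_indicator_le_one
  have hAΩ : MeasurableSet A := hm₁ _ hA
  have hset : ∀ s, MeasurableSet[m] s →
      ∫ ω in s, A.indicator h ω ∂μ = ∫ ω in s, (e * h) ω ∂μ := by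
    intro s hs
    have hsΩ : MeasurableSet s := hm _ hs
    calc ∫ ω in s, A.indicator h ω ∂μ
        = ∫ ω, h ω * (A ∩ s).indicator (fun _ => (1 : ℝ)) ω ∂μ := by
          simp only [← Set.indicator_mul_right, mul_one]
          rw [setIntegral_indicator hAΩ, integral_indicator (hAΩ.inter hsΩ), Set.inter_comm]
      _ = ∫ ω, h ω * (μ⟦A ∩ s | m₂⟧) ω ∂μ :=
          (integral_mul_condExp_of_stronglyMeasurable hm₂ hh hhi
            ((integrable_const 1).indicator (hAΩ.inter hsΩ))
            (ae_of_all _ fun ω => (norm_indicator_le_norm_self _ ω).trans_eq norm_one)).symm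
      _ = ∫ ω, h ω * μ[s.indicator e | m₂] ω ∂μ :=
          integral_congr_ae ((hind.condExp_indicator_inter_eq hm₁ hm₂ hA hs).mono
            fun ω hω => congrArg (h ω * ·) hω)
      _ = ∫ ω, h ω * s.indicator e ω ∂μ :=
          integral_mul_condExp_of_stronglyMeasurable hm₂ hh hhi (integrable_condExp.indicator hsΩ)
            (he_le.mono fun ω hω => (norm_indicator_le_norm_self e ω).trans hω)
      _ = ∫ ω in s, (e * h) ω ∂μ := by
          simp only [Pi.mul_apply, mul_comm (h _), ← Set.indicator_mul_left]
          rw [integral_indicator hsΩ]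
  calc μ[A.indicator h | m]
      =ᵐ[μ] μ[e * h | m] := condExp_congr_of_forall_setIntegral_eq hm (hhi.indicator hAΩ)
        (hhi.bdd_mul (he.mono hm).aestronglyMeasurable he_le) hset
    _ =ᵐ[μ] e * μ[h | m] := condExp_stronglyMeasurable_mul_of_bound hm he hhi 1 he_le

section CondIndepFun

variable [StandardBorelSpace Ω] [IsFiniteMeasure μ] {hm : m ≤ mΩ}

theorem CondIndepFun.congr_right_s5 {β γ : Type*} [MeasurableSpace β] [MeasurableSpace γ]
    {f : Ω → β} {g g' : Ω → γ} (hind : CondIndepFun m hm f g μ) (hg : g =ᵐ[μ] g') :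
    CondIndepFun m hm f g' μ :=
  Kernel.IndepFun.congr' hind (ae_of_all _ fun _ => .rfl)
    (Measure.ae_ae_of_ae_comp (by rwa [condExpKernel_comp_trim hm]))

theorem CondIndepFun.condExp_mul_eq_mul_condExp {Z X : Ω → ℝ} (hind : CondIndepFun m hm Z X μ)
    (hZ : Measurable Z) (hZb : ∀ ω, Z ω = 0 ∨ Z ω = 1) (hX : Integrable X μ) :
    μ[Z * X | m] =ᵐ[μ] μ[Z | m] * μ[X | m] := by
  set A := Z ⁻¹' {1}
  have hZA : ∀ (u : Ω → ℝ) ω, Z ω * u ω = A.indicator u ω := fun u ω => by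
    rcases hZb ω with h | h <;> simp [A, h]
  have hZ_eq : Z = A.indicator fun _ => 1 := funext fun ω => by simpa using hZA (fun _ => 1) ω
  have hX_mk : X =ᵐ[μ] hX.aemeasurable.mk X := hX.aemeasurable.ae_eq_mk
  have hind' := (condIndepFun_iff_condIndep _ _ _ _ _).mp (hind.congr_right_s5 hX_mk)
  calc μ[Z * X | m]
      =ᵐ[μ] μ[A.indicator (hX.aemeasurable.mk X) | m] :=
        condExp_congr_ae (hX_mk.mono fun ω hω => by simp only [Pi.mul_apply, hZA, hω])
    _ =ᵐ[μ] μ⟦A | m⟧ * μ[hX.aemeasurable.mk X | m] :=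
        hind'.condExp_indicator_mul hZ.comap_le hX.aemeasurable.measurable_mk.comap_le
          ⟨{1}, measurableSet_singleton 1, rfl⟩
          (Measurable.of_comap_le le_rfl).stronglyMeasurable (hX.congr hX_mk)
    _ =ᵐ[μ] μ[Z | m] * μ[X | m] := by
        rw [hZ_eq]
        exact Filter.EventuallyEq.rfl.mul (condExp_congr_ae hX_mk.symm)

end CondIndepFun

end ProbabilityTheory

theorem late_identification_one_sided_general
    {Ω : Type*} [mΩ : MeasurableSpace Ω] [StandardBorelSpace Ω]
    (P : Measure Ω) [IsProbabilityMeasure P]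
    (D1 D0 Z1 Z0 Y1 Y0 : Ω → ℝ)
    (hD1 : Measurable D1)
    (hZ1 : Measurable Z1)
    (hD1b : ∀ ω, D1 ω = 0 ∨ D1 ω = 1)
    (hZ1b : ∀ ω, Z1 ω = 0 ∨ Z1 ω = 1)
    (hY1 : Integrable Y1 P) (hY0 : Integrable Y0 P)
    (m : MeasurableSpace Ω)
    (hm : m ≤ mΩ)
    (Dk1 Dk0 Yk1 Yk0 : Ω → ℝ)
    (hDk1 : Dk1 = fun ω => Z1 ω * D1 ω + (1 - Z1 ω) * D0 ω)
    (hDk0 : Dk0 = fun ω => Z0 ω * D1 ω + (1 - Z0 ω) * D0 ω)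
    (hYk1 : Yk1 = fun ω => Dk1 ω * Y1 ω + (1 - Dk1 ω) * Y0 ω)
    (hYk0 : Yk0 = fun ω => Dk0 ω * Y1 ω + (1 - Dk0 ω) * Y0 ω)
    (hindep : CondIndepFun m hm (fun ω => (Z1 ω, Z0 ω))
      (fun ω => (Y1 ω, Y0 ω, D1 ω, D0 ω)) P)
    (hZ0zero : ∀ᵐ ω ∂P, Z0 ω = 0)
    (hD0zero : ∀ᵐ ω ∂P, D0 ω = 0) :
    (P[Yk0|m] =ᵐ[P] P[Y0|m])
      ∧ (∀ᵐ ω ∂P,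
          ((P[Yk1|m]) ω - (P[Yk0|m]) ω) * (P[D1|m]) ω
            = (P[Dk1|m]) ω * (P[(fun ω => (Y1 ω - Y0 ω) * D1 ω)|m]) ω) := by
  set τ : Ω → ℝ := fun ω => (Y1 ω - Y0 ω) * D1 ω
  have norm_le_one : ∀ {V : Ω → ℝ}, (∀ ω, V ω = 0 ∨ V ω = 1) → ∀ᵐ ω ∂P, ‖V ω‖ ≤ 1 :=
    fun hV => ae_of_all _ fun ω => by rcases hV ω with h | h <;> simp [h]
  have hτ_int : Integrable τ P :=
    (hY1.sub hY0).mul_bdd hD1.aestronglyMeasurable (norm_le_one hD1b)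
  have hZ1τ : CondIndepFun m hm Z1 τ P :=
    hindep.comp measurable_fst (ψ := fun p : ℝ × ℝ × ℝ × ℝ => (p.1 - p.2.1) * p.2.2.1) (by fun_prop)
  have hZ1D1 : CondIndepFun m hm Z1 D1 P :=
    hindep.comp measurable_fst (ψ := fun p : ℝ × ℝ × ℝ × ℝ => p.2.2.1) (by fun_prop)
  have hYk0_eq : P[Yk0|m] =ᵐ[P] P[Y0|m] := condExp_congr_ae <| by
    filter_upwards [hZ0zero, hD0zero] with ω hz hd
    simp [hYk0, hDk0, hz, hd]
  have hYk1_eq : P[Yk1|m] =ᵐ[P] P[Y0|m] + P[Z1|m] * P[τ|m] := calc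
    _ =ᵐ[P] P[Y0 + Z1 * τ | m] := condExp_congr_ae <| by
        filter_upwards [hD0zero] with ω hd
        simp only [hYk1, hDk1, Pi.add_apply, Pi.mul_apply, τ, hd]
        ring
    _ =ᵐ[P] P[Y0 | m] + P[Z1 * τ | m] :=
        condExp_add hY0 (hτ_int.bdd_mul hZ1.aestronglyMeasurable (norm_le_one hZ1b)) m
    _ =ᵐ[P] _ := Filter.EventuallyEq.rfl.add (hZ1τ.condExp_mul_eq_mul_condExp hZ1 hZ1b hτ_int)
  have hDk1_eq : P[Dk1|m] =ᵐ[P] P[Z1|m] * P[D1|m] := calc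
    _ =ᵐ[P] P[Z1 * D1 | m] := condExp_congr_ae <| by
        filter_upwards [hD0zero] with ω hd
        simp [hDk1, hd]
    _ =ᵐ[P] _ := hZ1D1.condExp_mul_eq_mul_condExp hZ1 hZ1b
        (.of_bound hD1.aestronglyMeasurable 1 (norm_le_one hD1b))
  refine ⟨hYk0_eq, ?_⟩
  filter_upwards [hYk0_eq, hYk1_eq, hDk1_eq] with ω h0 h1 hd
  simp only [h0, h1, hd, Pi.add_apply, Pi.mul_apply]
  ring

/-- **LATE identification in the one-experiment two-regime design under one-sided
noncompliance** (Corollary 1). With `Z⁰ = 0` a.s. and `D₀ = 0` a.s., `P`-a.e.: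
(i) `E[Y⁰|m] = E[Y₀|m]`, and
(ii) `(E[Y¹|m] − E[Y⁰|m]) · E[D₁|m] = E[D¹|m] · E[(Y₁−Y₀)·D₁|m]`. -/
theorem late_identification_one_sided
    {Ω 𝒳 : Type*} [mΩ : MeasurableSpace Ω] [StandardBorelSpace Ω] [Nonempty Ω]
    [MeasurableSpace 𝒳]
    (P : Measure Ω) [IsProbabilityMeasure P]
    (X : Ω → 𝒳) (hX : Measurable X)
    (D1 D0 Z1 Z0 Y1 Y0 : Ω → ℝ)
    (hD1 : Measurable D1) (hD0 : Measurable D0)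
    (hZ1 : Measurable Z1) (hZ0 : Measurable Z0)
    (hD1b : ∀ ω, D1 ω = 0 ∨ D1 ω = 1) (hD0b : ∀ ω, D0 ω = 0 ∨ D0 ω = 1)
    (hZ1b : ∀ ω, Z1 ω = 0 ∨ Z1 ω = 1) (hZ0b : ∀ ω, Z0 ω = 0 ∨ Z0 ω = 1)
    (hY1 : Integrable Y1 P) (hY0 : Integrable Y0 P)
    (m : MeasurableSpace Ω)
    (hm_def : m = MeasurableSpace.comap X inferInstance)
    (hm : m ≤ mΩ)
    (Dk1 Dk0 Yk1 Yk0 : Ω → ℝ)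
    (hDk1 : Dk1 = fun ω => Z1 ω * D1 ω + (1 - Z1 ω) * D0 ω)
    (hDk0 : Dk0 = fun ω => Z0 ω * D1 ω + (1 - Z0 ω) * D0 ω)
    (hYk1 : Yk1 = fun ω => Dk1 ω * Y1 ω + (1 - Dk1 ω) * Y0 ω)
    (hYk0 : Yk0 = fun ω => Dk0 ω * Y1 ω + (1 - Dk0 ω) * Y0 ω)
    (hindep : CondIndepFun m hm (fun ω => (Z1 ω, Z0 ω))
      (fun ω => (Y1 ω, Y0 ω, D1 ω, D0 ω)) P)
    (hmono : ∀ᵐ ω ∂P, D0 ω ≤ D1 ω)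
    (hZ0zero : ∀ᵐ ω ∂P, Z0 ω = 0)
    (hD0zero : ∀ᵐ ω ∂P, D0 ω = 0) :
    (P[Yk0|m] =ᵐ[P] P[Y0|m])
      ∧ (∀ᵐ ω ∂P,
          ((P[Yk1|m]) ω - (P[Yk0|m]) ω) * (P[D1|m]) ω
            = (P[Dk1|m]) ω * (P[(fun ω => (Y1 ω - Y0 ω) * D1 ω)|m]) ω) :=
  late_identification_one_sided_general (mΩ := mΩ) P D1 D0 Z1 Z0 Y1 Y0 hD1 hZ1 hD1b hZ1b hY1 hY0 m
    hm Dk1 Dk0 Yk1 Yk0 hDk1 hDk0 hYk1 hYk0 hindep hZ0zero hD0zero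
end

section
/- Let (Ω, F, P) be a probability space and let π, ν : Ω → ℝ be measurable with π essentially bounded, π ≠ 0 P-almost everywhere, ν ∈ L²(P), and μ₀ := ν/π ∈ L²(P). For f, g ∈ L²(P) define J(f, g) := E[2·(π·f − ν)·g − g²]. Then for every f ∈ L²(P), sup over g ∈ L²(P) of J(f, g) equals E[(π·f − ν)²], and μ₀ is the (P-a.e. unique) minimizer over f ∈ L²(P) of the function f ↦ sup_{g ∈ L²(P)} J(f, g). -/
/-!
Pointwise, `2 h g - g² = h² - (h - g)²`, so `g ↦ E[2 h g - g²]` is maximised exactly at `g = h`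
with value `E[h²]`: the inner supremum turns the minimax problem into least squares for
`π f - ν`. That residual vanishes a.e. at `f = ν / π` and, since `π ≠ 0` a.e., only there.
-/

open MeasureTheory Filter

section

variable {Ω : Type*} [MeasurableSpace Ω] {μ : Measure Ω}

theorem integral_two_mul_mul_sub_sq_le_integral_sq {h g : Ω → ℝ} (hh : MemLp h 2 μ)
    (hg : MemLp g 2 μ) :
    ∫ ω, (2 * h ω * g ω - g ω ^ 2) ∂μ ≤ ∫ ω, h ω ^ 2 ∂μ := by
  have hsplit : (fun ω => 2 * h ω * g ω - g ω ^ 2) = fun ω => h ω ^ 2 - (h ω - g ω) ^ 2 := by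
    funext ω; ring
  have hgap : Integrable (fun ω => (h ω - g ω) ^ 2) μ := (hh.sub hg).integrable_sq
  rw [hsplit, integral_sub hh.integrable_sq hgap]
  have hgap_nonneg : 0 ≤ ∫ ω, (h ω - g ω) ^ 2 ∂μ := integral_nonneg fun ω => sq_nonneg _
  linarith

theorem isGreatest_integral_two_mul_mul_sub_sq {h : Ω → ℝ} (hh : MemLp h 2 μ) :
    IsGreatest {x : ℝ | ∃ g : Ω → ℝ, MemLp g 2 μ ∧ x = ∫ ω, (2 * h ω * g ω - g ω ^ 2) ∂μ}
      (∫ ω, h ω ^ 2 ∂μ) := by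
  refine ⟨⟨h, hh, integral_congr_ae (Eventually.of_forall fun ω => by ring)⟩, ?_⟩
  rintro x ⟨g, hg, rfl⟩
  exact integral_two_mul_mul_sub_sq_le_integral_sq hh hg

theorem ae_eq_zero_of_integral_sq_eq_zero {h : Ω → ℝ} (hh : MemLp h 2 μ)
    (h0 : ∫ ω, h ω ^ 2 ∂μ = 0) : ∀ᵐ ω ∂μ, h ω = 0 := by
  have hsq := (integral_eq_zero_iff_of_nonneg (fun ω => sq_nonneg (h ω)) hh.integrable_sq).mp h0
  filter_upwards [hsq] with ω hω
  exact pow_eq_zero_iff two_ne_zero |>.mp hω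

theorem ae_mul_div_cancel {π ν : Ω → ℝ} (hπ : ∀ᵐ ω ∂μ, π ω ≠ 0) :
    ∀ᵐ ω ∂μ, π ω * (ν ω / π ω) = ν ω := by
  filter_upwards [hπ] with ω hω
  exact mul_div_cancel₀ (ν ω) hω

theorem ae_eq_div_of_ae_mul_eq {π ν f : Ω → ℝ} (hπ : ∀ᵐ ω ∂μ, π ω ≠ 0)
    (hf : ∀ᵐ ω ∂μ, π ω * f ω = ν ω) : f =ᵐ[μ] fun ω => ν ω / π ω := by
  filter_upwards [hπ, hf] with ω hπω hfω
  rw [eq_div_iff hπω, mul_comm, hfω]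

end

theorem dls_minimax_general
    {Ω : Type*} [MeasurableSpace Ω]
    (P : Measure Ω)
    (π ν : Ω → ℝ)
    (hπbdd : MemLp π ⊤ P)
    (hπne : ∀ᵐ ω ∂P, π ω ≠ 0)
    (hν : MemLp ν 2 P)
    (μ₀ : Ω → ℝ) (hμ₀_def : μ₀ = fun ω => ν ω / π ω)
    (J : (Ω → ℝ) → (Ω → ℝ) → ℝ)
    (hJ : J = fun f g => ∫ ω, (2 * (π ω * f ω - ν ω) * g ω - g ω ^ 2) ∂P) :
    (∀ f : Ω → ℝ, MemLp f 2 P →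
        IsGreatest {x : ℝ | ∃ g : Ω → ℝ, MemLp g 2 P ∧ x = J f g}
          (∫ ω, (π ω * f ω - ν ω) ^ 2 ∂P))
      ∧ (∀ f : Ω → ℝ, MemLp f 2 P →
          ∫ ω, (π ω * μ₀ ω - ν ω) ^ 2 ∂P ≤ ∫ ω, (π ω * f ω - ν ω) ^ 2 ∂P)
      ∧ (∀ f : Ω → ℝ, MemLp f 2 P →
          ∫ ω, (π ω * f ω - ν ω) ^ 2 ∂P = ∫ ω, (π ω * μ₀ ω - ν ω) ^ 2 ∂P →
            f =ᵐ[P] μ₀) := by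
  subst hJ hμ₀_def
  have hresidual : ∀ f : Ω → ℝ, MemLp f 2 P → MemLp (fun ω => π ω * f ω - ν ω) 2 P :=
    fun f hf => (hf.smul (p := ⊤) hπbdd).sub hν
  have hμ₀_zero : ∫ ω, (π ω * (ν ω / π ω) - ν ω) ^ 2 ∂P = 0 := by
    refine integral_eq_zero_of_ae ?_
    filter_upwards [ae_mul_div_cancel (ν := ν) hπne] with ω hω
    simp [hω]
  refine ⟨fun f hf => isGreatest_integral_two_mul_mul_sub_sq (hresidual f hf),
    fun f _ => hμ₀_zero ▸ integral_nonneg fun ω => sq_nonneg _, fun f hf hmin => ?_⟩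
  refine ae_eq_div_of_ae_mul_eq hπne ?_
  filter_upwards [ae_eq_zero_of_integral_sq_eq_zero (hresidual f hf) (hmin.trans hμ₀_zero)]
    with ω hω
  exact sub_eq_zero.mp hω

/-- **Minimax formulation of the direct least squares estimator.** With `π` bounded and
a.e. nonzero, `ν ∈ L²`, and `μ₀ = ν/π ∈ L²`, for `J(f,g) := E[2(πf − ν)g − g²]`:
for every `f ∈ L²`, `sup_{g ∈ L²} J(f,g) = E[(πf − ν)²]` (and the sup is attained), and
`μ₀` is the a.e. unique minimizer over `f ∈ L²` of `f ↦ sup_{g ∈ L²} J(f,g)`. -/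
theorem dls_minimax
    {Ω : Type*} [MeasurableSpace Ω]
    (P : Measure Ω) [IsProbabilityMeasure P]
    (π ν : Ω → ℝ) (hπm : Measurable π) (hνm : Measurable ν)
    (hπbdd : MemLp π ⊤ P)
    (hπne : ∀ᵐ ω ∂P, π ω ≠ 0)
    (hν : MemLp ν 2 P)
    (μ₀ : Ω → ℝ) (hμ₀_def : μ₀ = fun ω => ν ω / π ω)
    (hμ₀ : MemLp μ₀ 2 P)
    (J : (Ω → ℝ) → (Ω → ℝ) → ℝ)
    (hJ : J = fun f g => ∫ ω, (2 * (π ω * f ω - ν ω) * g ω - g ω ^ 2) ∂P) :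
    (∀ f : Ω → ℝ, MemLp f 2 P →
        IsGreatest {x : ℝ | ∃ g : Ω → ℝ, MemLp g 2 P ∧ x = J f g}
          (∫ ω, (π ω * f ω - ν ω) ^ 2 ∂P))
      ∧ (∀ f : Ω → ℝ, MemLp f 2 P →
          ∫ ω, (π ω * μ₀ ω - ν ω) ^ 2 ∂P ≤ ∫ ω, (π ω * f ω - ν ω) ^ 2 ∂P)
      ∧ (∀ f : Ω → ℝ, MemLp f 2 P →
          ∫ ω, (π ω * f ω - ν ω) ^ 2 ∂P = ∫ ω, (π ω * μ₀ ω - ν ω) ^ 2 ∂P →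
            f =ᵐ[P] μ₀) :=
  dls_minimax_general P π ν hπbdd hπne hν μ₀ hμ₀_def J hJ
end

section
/- Let (Ω, F, P) be a probability space, m ⊆ F a sub-σ-algebra, T, U ∈ L¹(P) bounded random variables, π a version of E[T | m] and ν a version of E[U | m], with π ≠ 0 P-almost everywhere. Let w, f : Ω → ℝ be bounded m-measurable functions, and assume ν is bounded and w·ν²/π is integrable. Then E[(w/π)·(π·f − ν)²] = E[T·w·f²] − 2·E[U·w·f] + E[(w/π)·ν²]. -/
/-!
Where `π ≠ 0` the square expands as `(w/π)(πf − ν)² = π·(w f²) − 2 ν·(w f) + (w/π) ν²`.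
The functions `w f²` and `w f` are bounded and `m`-measurable, so pulling them out of the
conditional expectation and taking expectations gives `E[π·(w f²)] = E[T·(w f²)]` and
`E[ν·(w f)] = E[U·(w f)]`.
-/

open MeasureTheory

section

variable {Ω : Type*} {m mΩ : MeasurableSpace Ω} {μ : Measure Ω}

theorem integral_condExp_mul_of_stronglyMeasurable (hm : m ≤ mΩ) [SigmaFinite (μ.trim hm)]
    {f g : Ω → ℝ} (hg : StronglyMeasurable[m] g) (hfg : Integrable (f * g) μ)
    (hf : Integrable f μ) :
    ∫ ω, μ[f|m] ω * g ω ∂μ = ∫ ω, f ω * g ω ∂μ :=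
  calc ∫ ω, μ[f|m] ω * g ω ∂μ = ∫ ω, μ[f * g|m] ω ∂μ :=
        integral_congr_ae (condExp_mul_of_stronglyMeasurable_right hg hfg hf).symm
    _ = ∫ ω, f ω * g ω ∂μ := integral_condExp hm

theorem integral_mul_of_ae_eq_condExp_of_bound (hm : m ≤ mΩ) [SigmaFinite (μ.trim hm)]
    {f g φ : Ω → ℝ} {C : ℝ} (hφ : φ =ᵐ[μ] μ[f|m]) (hf : Integrable f μ)
    (hg : StronglyMeasurable[m] g) (hg_bound : ∀ᵐ ω ∂μ, ‖g ω‖ ≤ C) :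
    Integrable (fun ω => φ ω * g ω) μ ∧ ∫ ω, φ ω * g ω ∂μ = ∫ ω, f ω * g ω ∂μ := by
  have hg_meas : AEStronglyMeasurable g μ := (hg.mono hm).aestronglyMeasurable
  refine ⟨(integrable_condExp.congr hφ.symm).mul_bdd hg_meas hg_bound, ?_⟩
  have hφg : (fun ω => φ ω * g ω) =ᵐ[μ] fun ω => μ[f|m] ω * g ω := by
    filter_upwards [hφ] with ω hω
    rw [hω]
  rw [integral_congr_ae hφg]
  exact integral_condExp_mul_of_stronglyMeasurable hm hg (hf.mul_bdd hg_meas hg_bound) hf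

end

theorem abs_mul_le_mul_of_abs_le {a b A B : ℝ} (ha : |a| ≤ A) (hb : |b| ≤ B) :
    |a * b| ≤ A * B := by
  rw [abs_mul]
  exact mul_le_mul ha hb (abs_nonneg b) ((abs_nonneg a).trans ha)

theorem dwls_objective_rewrite_general
    {Ω : Type*} [mΩ : MeasurableSpace Ω]
    (P : Measure Ω) [IsProbabilityMeasure P]
    (m : MeasurableSpace Ω) (hm : m ≤ mΩ)
    (T U : Ω → ℝ) (hT : Integrable T P) (hU : Integrable U P)
    (π ν : Ω → ℝ)
    (hπ : π =ᵐ[P] P[T|m]) (hν : ν =ᵐ[P] P[U|m])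
    (hπne : ∀ᵐ ω ∂P, π ω ≠ 0)
    (w f : Ω → ℝ)
    (hw : Measurable[m] w) (hf : Measurable[m] f)
    (hwb : ∃ C, ∀ ω, |w ω| ≤ C) (hfb : ∃ C, ∀ ω, |f ω| ≤ C)
    (hS : Integrable (fun ω => w ω * ν ω ^ 2 / π ω) P) :
    ∫ ω, (w ω / π ω) * (π ω * f ω - ν ω) ^ 2 ∂P
      = ∫ ω, T ω * w ω * f ω ^ 2 ∂P - 2 * ∫ ω, U ω * w ω * f ω ∂P
        + ∫ ω, (w ω / π ω) * ν ω ^ 2 ∂P := by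
  obtain ⟨Cw, hCw⟩ := hwb
  obtain ⟨Cf, hCf⟩ := hfb
  have hwf_bound (ω : Ω) : |w ω * f ω| ≤ Cw * Cf := abs_mul_le_mul_of_abs_le (hCw ω) (hCf ω)
  have hwf2_bound (ω : Ω) : |w ω * f ω ^ 2| ≤ Cw * Cf * Cf := by
    rw [pow_two, ← mul_assoc]
    exact abs_mul_le_mul_of_abs_le (hwf_bound ω) (hCf ω)
  obtain ⟨hA, hTA⟩ := integral_mul_of_ae_eq_condExp_of_bound (g := fun ω => w ω * f ω ^ 2)
    hm hπ hT (hw.stronglyMeasurable.mul (hf.stronglyMeasurable.pow 2)) (.of_forall hwf2_bound)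
  obtain ⟨hB, hUB⟩ := integral_mul_of_ae_eq_condExp_of_bound (g := fun ω => w ω * f ω)
    hm hν hU (hw.stronglyMeasurable.mul hf.stronglyMeasurable) (.of_forall hwf_bound)
  have hS' : Integrable (fun ω => (w ω / π ω) * ν ω ^ 2) P :=
    hS.congr (.of_forall fun ω => by ring)
  have hexpand : (fun ω => (w ω / π ω) * (π ω * f ω - ν ω) ^ 2) =ᵐ[P]
      fun ω => π ω * (w ω * f ω ^ 2) - 2 * (ν ω * (w ω * f ω)) + (w ω / π ω) * ν ω ^ 2 := by
    filter_upwards [hπne] with ω hω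
    field_simp
    ring
  have hAB : Integrable (fun ω => π ω * (w ω * f ω ^ 2) - 2 * (ν ω * (w ω * f ω))) P :=
    hA.sub (hB.const_mul 2)
  rw [integral_congr_ae hexpand, integral_add hAB hS',
    integral_sub hA (hB.const_mul 2), integral_const_mul, hTA, hUB]
  simp only [mul_assoc]

/-- **Sample-average form of the directly weighted least squares (DWLS) objective.**
With `π = E[T|m]`, `ν = E[U|m]`, `π ≠ 0` a.e., and bounded `m`-measurable weight `w`
and regressor `f`,
`E[(w/π)(π·f − ν)²] = E[T·w·f²] − 2E[U·w·f] + E[(w/π)·ν²]`. -/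
theorem dwls_objective_rewrite
    {Ω : Type*} [mΩ : MeasurableSpace Ω]
    (P : Measure Ω) [IsProbabilityMeasure P]
    (m : MeasurableSpace Ω) (hm : m ≤ mΩ)
    (T U : Ω → ℝ) (hT : Integrable T P) (hU : Integrable U P)
    (hTb : ∃ C, ∀ ω, |T ω| ≤ C) (hUb : ∃ C, ∀ ω, |U ω| ≤ C)
    (π ν : Ω → ℝ)
    (hπ : π =ᵐ[P] P[T|m]) (hν : ν =ᵐ[P] P[U|m])
    (hπne : ∀ᵐ ω ∂P, π ω ≠ 0)
    (w f : Ω → ℝ)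
    (hw : Measurable[m] w) (hf : Measurable[m] f)
    (hwb : ∃ C, ∀ ω, |w ω| ≤ C) (hfb : ∃ C, ∀ ω, |f ω| ≤ C)
    (hνb : ∃ C, ∀ ω, |ν ω| ≤ C)
    (hS : Integrable (fun ω => w ω * ν ω ^ 2 / π ω) P) :
    ∫ ω, (w ω / π ω) * (π ω * f ω - ν ω) ^ 2 ∂P
      = ∫ ω, T ω * w ω * f ω ^ 2 ∂P - 2 * ∫ ω, U ω * w ω * f ω ∂P
        + ∫ ω, (w ω / π ω) * ν ω ^ 2 ∂P :=
  dwls_objective_rewrite_general (mΩ := mΩ) P m hm T U hT hU π ν hπ hν hπne w f hw hf hwb hfb hS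
end

section
/- Let (Ω, F, P) be a probability space, m ⊆ F a sub-σ-algebra, T, U ∈ L¹(P) bounded random variables, π a version of E[T | m] and ν a version of E[U | m], with π ≠ 0 P-almost everywhere, and set μ₀ := ν/π. Let w be an m-measurable function with w ≠ 0 P-almost everywhere and 1/w bounded, let f : Ω → ℝ be bounded and m-measurable, assume ν is bounded and ν²/(π·w) is integrable. Then E[(π/w)·(f − μ₀)²] = E[T·f²/w] − 2·E[U·f/w] + E[(π/w)·μ₀²]. -/
open MeasureTheory

/-!
Since `f` and `w` are `m`-measurable, the pull-out property of conditional expectation replaces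
`T` by `π` and `U` by `ν` in the two cross terms, and pointwise, where `π ≠ 0`,
`(π/w)(f - ν/π)² = π f²/w - 2 ν f/w + (π/w)(ν/π)²`.
-/

namespace MeasureTheory

variable {Ω : Type*} {m mΩ : MeasurableSpace Ω} {μ : Measure Ω}

theorem integral_mul_condExp_of_stronglyMeasurable_left (hm : m ≤ mΩ) [SigmaFinite (μ.trim hm)]
    {g X : Ω → ℝ} (hg : StronglyMeasurable[m] g) (hgX : Integrable (fun ω => g ω * X ω) μ)
    (hX : Integrable X μ) :
    ∫ ω, g ω * μ[X|m] ω ∂μ = ∫ ω, g ω * X ω ∂μ := by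
  rw [← integral_condExp hm (f := fun ω => g ω * X ω)]
  exact integral_congr_ae (condExp_mul_of_stronglyMeasurable_left hg hgX hX).symm

theorem Integrable.mul_div_of_bounded {X f w : Ω → ℝ} (hX : Integrable X μ)
    (hf : Measurable f) (hw : Measurable w)
    (hfb : ∃ C, ∀ ω, |f ω| ≤ C) (hwb : ∃ C, ∀ ω, |1 / w ω| ≤ C) :
    Integrable (fun ω => X ω * f ω / w ω) μ := by
  obtain ⟨C, hC⟩ := hfb
  obtain ⟨D, hD⟩ := hwb
  have hbound : ∀ ω, ‖f ω / w ω‖ ≤ C * D := fun ω => by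
    rw [Real.norm_eq_abs, div_eq_mul_one_div, abs_mul]
    exact mul_le_mul (hC ω) (hD ω) (abs_nonneg _) ((abs_nonneg _).trans (hC ω))
  convert hX.bdd_mul (hf.div hw).aestronglyMeasurable (ae_of_all _ hbound) using 2
  rw [Pi.div_apply]
  ring

theorem integral_mul_div_eq_of_ae_eq_condExp (hm : m ≤ mΩ) [SigmaFinite (μ.trim hm)]
    {X Y f w : Ω → ℝ} (hX : Integrable X μ) (hY : Y =ᵐ[μ] μ[X|m])
    (hf : Measurable[m] f) (hw : Measurable[m] w)
    (hfb : ∃ C, ∀ ω, |f ω| ≤ C) (hwb : ∃ C, ∀ ω, |1 / w ω| ≤ C) :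
    ∫ ω, X ω * f ω / w ω ∂μ = ∫ ω, Y ω * f ω / w ω ∂μ := by
  have hfw : StronglyMeasurable[m] (fun ω => f ω / w ω) := (hf.div hw).stronglyMeasurable
  have hint : Integrable (fun ω => f ω / w ω * X ω) μ := by
    convert hX.mul_div_of_bounded (hf.mono hm le_rfl) (hw.mono hm le_rfl) hfb hwb using 2
    ring
  calc ∫ ω, X ω * f ω / w ω ∂μ = ∫ ω, f ω / w ω * X ω ∂μ := by
        congr 1; ext ω; ring
    _ = ∫ ω, f ω / w ω * μ[X|m] ω ∂μ :=
        (integral_mul_condExp_of_stronglyMeasurable_left hm hfw hint hX).symm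
    _ = ∫ ω, Y ω * f ω / w ω ∂μ := integral_congr_ae <| by
        filter_upwards [hY] with ω hω
        rw [hω]
        ring

end MeasureTheory

theorem div_mul_sub_div_sq {p v w f : ℝ} (hp : p ≠ 0) :
    p / w * (f - v / p) ^ 2 = p * f ^ 2 / w - 2 * (v * f / w) + p / w * (v / p) ^ 2 := by
  field_simp
  ring

theorem div_mul_div_sq (p v w : ℝ) : p / w * (v / p) ^ 2 = v ^ 2 / (p * w) := by
  rcases eq_or_ne p 0 with rfl | hp
  · simp
  · field_simp

theorem iwls_objective_rewrite_general
    {Ω : Type*} [mΩ : MeasurableSpace Ω]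
    (P : Measure Ω) [IsProbabilityMeasure P]
    (m : MeasurableSpace Ω) (hm : m ≤ mΩ)
    (T U : Ω → ℝ) (hT : Integrable T P) (hU : Integrable U P)
    (π ν : Ω → ℝ)
    (hπ : π =ᵐ[P] P[T|m]) (hν : ν =ᵐ[P] P[U|m])
    (hπne : ∀ᵐ ω ∂P, π ω ≠ 0)
    (μ₀ : Ω → ℝ) (hμ₀_def : μ₀ = fun ω => ν ω / π ω)
    (w : Ω → ℝ) (hw : Measurable[m] w)
    (hwinvb : ∃ C, ∀ ω, |1 / w ω| ≤ C)
    (f : Ω → ℝ) (hf : Measurable[m] f) (hfb : ∃ C, ∀ ω, |f ω| ≤ C)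
    (hS' : Integrable (fun ω => ν ω ^ 2 / (π ω * w ω)) P) :
    ∫ ω, (π ω / w ω) * (f ω - μ₀ ω) ^ 2 ∂P
      = ∫ ω, T ω * f ω ^ 2 / w ω ∂P - 2 * ∫ ω, U ω * f ω / w ω ∂P
        + ∫ ω, (π ω / w ω) * μ₀ ω ^ 2 ∂P := by
  subst hμ₀_def
  beta_reduce
  have hf2b : ∃ C, ∀ ω, |f ω ^ 2| ≤ C := by
    obtain ⟨C, hC⟩ := hfb
    exact ⟨C ^ 2, fun ω => by rw [abs_pow]; exact pow_le_pow_left₀ (abs_nonneg _) (hC ω) 2⟩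
  have hπT := integral_mul_div_eq_of_ae_eq_condExp hm hT hπ (hf.pow_const 2) hw hf2b hwinvb
  have hνU := integral_mul_div_eq_of_ae_eq_condExp hm hU hν hf hw hfb hwinvb
  have hπf2 : Integrable (fun ω => π ω * f ω ^ 2 / w ω) P :=
    (integrable_condExp.congr hπ.symm).mul_div_of_bounded
      ((hf.pow_const 2).mono hm le_rfl) (hw.mono hm le_rfl) hf2b hwinvb
  have hνf : Integrable (fun ω => ν ω * f ω / w ω) P :=
    (integrable_condExp.congr hν.symm).mul_div_of_bounded
      (hf.mono hm le_rfl) (hw.mono hm le_rfl) hfb hwinvb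
  have hS : Integrable (fun ω => π ω / w ω * (ν ω / π ω) ^ 2) P :=
    hS'.congr (ae_of_all _ fun ω => (div_mul_div_sq _ _ _).symm)
  have hcross : Integrable (fun ω => π ω * f ω ^ 2 / w ω - 2 * (ν ω * f ω / w ω)) P :=
    hπf2.sub (hνf.const_mul 2)
  have hexpand := hπne.mono fun ω hπω => div_mul_sub_div_sq (v := ν ω) (w := w ω) (f := f ω) hπω
  rw [integral_congr_ae hexpand, integral_add hcross hS, integral_sub hπf2 (hνf.const_mul 2),
    integral_const_mul, hπT, hνU]

/-- **Sample-average form of the inverse weighted least squares (IWLS) objective.**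
With `π = E[T|m]`, `ν = E[U|m]`, `π ≠ 0` a.e., `μ₀ = ν/π`, and an `m`-measurable
weight `w` that is a.e. nonzero with bounded inverse,
`E[(π/w)(f − μ₀)²] = E[T·f²/w] − 2E[U·f/w] + E[(π/w)·μ₀²]`. -/
theorem iwls_objective_rewrite
    {Ω : Type*} [mΩ : MeasurableSpace Ω]
    (P : Measure Ω) [IsProbabilityMeasure P]
    (m : MeasurableSpace Ω) (hm : m ≤ mΩ)
    (T U : Ω → ℝ) (hT : Integrable T P) (hU : Integrable U P)
    (hTb : ∃ C, ∀ ω, |T ω| ≤ C) (hUb : ∃ C, ∀ ω, |U ω| ≤ C)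
    (π ν : Ω → ℝ)
    (hπ : π =ᵐ[P] P[T|m]) (hν : ν =ᵐ[P] P[U|m])
    (hπne : ∀ᵐ ω ∂P, π ω ≠ 0)
    (μ₀ : Ω → ℝ) (hμ₀_def : μ₀ = fun ω => ν ω / π ω)
    (w : Ω → ℝ) (hw : Measurable[m] w)
    (hwne : ∀ᵐ ω ∂P, w ω ≠ 0)
    (hwinvb : ∃ C, ∀ ω, |1 / w ω| ≤ C)
    (f : Ω → ℝ) (hf : Measurable[m] f) (hfb : ∃ C, ∀ ω, |f ω| ≤ C)
    (hνb : ∃ C, ∀ ω, |ν ω| ≤ C)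
    (hS' : Integrable (fun ω => ν ω ^ 2 / (π ω * w ω)) P) :
    ∫ ω, (π ω / w ω) * (f ω - μ₀ ω) ^ 2 ∂P
      = ∫ ω, T ω * f ω ^ 2 / w ω ∂P - 2 * ∫ ω, U ω * f ω / w ω ∂P
        + ∫ ω, (π ω / w ω) * μ₀ ω ^ 2 ∂P :=
  iwls_objective_rewrite_general (mΩ := mΩ) P m hm T U hT hU π ν hπ hν hπne μ₀ hμ₀_def w hw hwinvb f
    hf hfb hS'
end
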